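/- arXiv:math/9801069 — 3 statements merged into one kernel-verified Lean document; each statement's English description precedes it below -/
import Mathlib

section
/- Let N be a normal subgroup of a discrete group G. A Fell bundle 𝒜 over G is isomorphic to a pull-back bundle q*𝒟 for some Fell bundle 𝒟 over G/N if and only if there is a homomorphism u of N into the unitary multipliers UM(𝒜) such that (i) u_n is a multiplier of order n (u_n ∈ M(A_n)) for all n ∈ N, and (ii) a_s u_n = u_{sns⁻¹} a_s for all a_s ∈ A_s and n ∈ N. -/
noncomputable section

open scoped ComplexConjugate
open Function Set Submodule Classical
attribute [local instance] Classical.propDecidable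

/-- A bundled (non-unital) C*-algebra. -/
structure CStarAlg : Type 1 where
  carrier : Type
  [inst : NonUnitalCStarAlgebra carrier]

attribute [instance] CStarAlg.inst

/-- A bundled complex Hilbert space. -/
structure HilbertC : Type 1 where
  carrier : Type
  [instN : NormedAddCommGroup carrier]
  [instI : InnerProductSpace ℂ carrier]
  [instC : CompleteSpace carrier]

attribute [instance] HilbertC.instN HilbertC.instI HilbertC.instC

/-- The C*-algebra of bounded operators on a Hilbert space. -/
abbrev HilbertC.Op (H : HilbertC) : Type := H.carrier →L[ℂ] H.carrier

/-- A Fell bundle (C*-algebraic bundle) over a discrete group `G`:  a family of Banach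
spaces `F s` together with bilinear multiplications `F s × F t → F (s*t)` and conjugate
linear involutions `F s → F s⁻¹` satisfying the axioms of a C*-algebraic bundle. -/
structure FellBundle (G : Type) [Group G] : Type 1 where
  F : G → Type
  [nacg : ∀ s, NormedAddCommGroup (F s)]
  [nsp : ∀ s, NormedSpace ℂ (F s)]
  [cplt : ∀ s, CompleteSpace (F s)]
  mul : ∀ {s t : G}, F s → F t → F (s * t)
  star' : ∀ {s : G}, F s → F s⁻¹
  add_mul' : ∀ {s t : G} (a b : F s) (c : F t), mul (a + b) c = mul a c + mul b c
  mul_add' : ∀ {s t : G} (a : F s) (b c : F t), mul a (b + c) = mul a b + mul a c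
  smul_mul' : ∀ {s t : G} (z : ℂ) (a : F s) (b : F t), mul (z • a) b = z • mul a b
  mul_smul' : ∀ {s t : G} (z : ℂ) (a : F s) (b : F t), mul a (z • b) = z • mul a b
  norm_mul_le' : ∀ {s t : G} (a : F s) (b : F t), ‖mul a b‖ ≤ ‖a‖ * ‖b‖
  mul_assoc' : ∀ {s t u : G} (a : F s) (b : F t) (c : F u),
    HEq (mul (mul a b) c) (mul a (mul b c))
  star_add' : ∀ {s : G} (a b : F s), star' (a + b) = star' a + star' b
  star_smul' : ∀ {s : G} (z : ℂ) (a : F s), star' (z • a) = conj z • star' a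
  star_star' : ∀ {s : G} (a : F s), HEq (star' (star' a)) a
  star_mul'' : ∀ {s t : G} (a : F s) (b : F t),
    HEq (star' (mul a b)) (mul (star' b) (star' a))
  norm_star' : ∀ {s : G} (a : F s), ‖star' a‖ = ‖a‖
  norm_star_mul_self' : ∀ {s : G} (a : F s), ‖mul (star' a) a‖ = ‖a‖ * ‖a‖

attribute [instance] FellBundle.nacg FellBundle.nsp FellBundle.cplt

variable {G : Type} [Group G]

/-- Transport between the fibers of a Fell bundle along an equality of indices. -/
def FellBundle.cst (𝔅 : FellBundle G) {s t : G} (h : s = t) (a : 𝔅.F s) : 𝔅.F t :=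
  h ▸ a

/-- The pull-back `q*𝒟` of a Fell bundle `𝒟` over `G/N` along the quotient map
`q : G → G/N`; its fiber over `s` is the fiber of `𝒟` over `sN`. -/
def FellBundle.pullback (N : Subgroup G) [N.Normal] (𝔇 : FellBundle (G ⧸ N)) :
    FellBundle G where
  F s := 𝔇.F (↑s)
  mul a b := 𝔇.mul a b
  star' a := 𝔇.star' a
  add_mul' := fun a b c => 𝔇.add_mul' a b c
  mul_add' := fun a b c => 𝔇.mul_add' a b c
  smul_mul' := fun z a b => 𝔇.smul_mul' z a b
  mul_smul' := fun z a b => 𝔇.mul_smul' z a b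
  norm_mul_le' := fun a b => 𝔇.norm_mul_le' a b
  mul_assoc' := fun a b c => 𝔇.mul_assoc' a b c
  star_add' := fun a b => 𝔇.star_add' a b
  star_smul' := fun z a => 𝔇.star_smul' z a
  star_star' := fun a => 𝔇.star_star' a
  star_mul'' := fun a b => 𝔇.star_mul'' a b
  norm_star' := fun a => 𝔇.norm_star' a
  norm_star_mul_self' := fun a => 𝔇.norm_star_mul_self' a

/-- The restriction `𝒜_H` of a Fell bundle over `G` to a subgroup `H ≤ G`. -/
def FellBundle.restrict (𝔅 : FellBundle G) (H : Subgroup G) : FellBundle H where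
  F h := 𝔅.F (↑h)
  mul a b := 𝔅.mul a b
  star' a := 𝔅.star' a
  add_mul' := fun a b c => 𝔅.add_mul' a b c
  mul_add' := fun a b c => 𝔅.mul_add' a b c
  smul_mul' := fun z a b => 𝔅.smul_mul' z a b
  mul_smul' := fun z a b => 𝔅.mul_smul' z a b
  norm_mul_le' := fun a b => 𝔅.norm_mul_le' a b
  mul_assoc' := fun a b c => 𝔅.mul_assoc' a b c
  star_add' := fun a b => 𝔅.star_add' a b
  star_smul' := fun z a => 𝔅.star_smul' z a
  star_star' := fun a => 𝔅.star_star' a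
  star_mul'' := fun a b => 𝔅.star_mul'' a b
  norm_star' := fun a => 𝔅.norm_star' a
  norm_star_mul_self' := fun a => 𝔅.norm_star_mul_self' a

/-- An isomorphism of Fell bundles over the same group: a family of isometric linear
bijections between the fibers intertwining multiplication and involution. -/
structure FellBundleIso (𝔄 𝔅 : FellBundle G) : Type where
  φ : ∀ s, 𝔄.F s → 𝔅.F s
  φ_add : ∀ s (a b : 𝔄.F s), φ s (a + b) = φ s a + φ s b
  φ_smul : ∀ s (z : ℂ) (a : 𝔄.F s), φ s (z • a) = z • φ s a
  φ_norm : ∀ s (a : 𝔄.F s), ‖φ s a‖ = ‖a‖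
  φ_bij : ∀ s, Function.Bijective (φ s)
  φ_mul : ∀ (s t : G) (a : 𝔄.F s) (b : 𝔄.F t), φ (s*t) (𝔄.mul a b) = 𝔅.mul (φ s a) (φ t b)
  φ_star : ∀ (s : G) (a : 𝔄.F s), φ s⁻¹ (𝔄.star' a) = 𝔅.star' (φ s a)

/-- A multiplier of order `s` of a Fell bundle: a pair of maps `L : F t → F (s*t)`,
`R : F t → F (t*s)` satisfying the associativity condition `R(a)b = aL(b)`. -/
structure FBMul (𝔅 : FellBundle G) (s : G) : Type where
  L : ∀ t, 𝔅.F t → 𝔅.F (s * t)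
  R : ∀ t, 𝔅.F t → 𝔅.F (t * s)
  assoc : ∀ (t u : G) (a : 𝔅.F t) (b : 𝔅.F u), HEq (𝔅.mul (R t a) b) (𝔅.mul a (L u b))

/-- A multiplier `m` of order `s` is unitary when `m* m = m m* = 1` in `M(A_e)`, where
the adjoint is given by `m* a = (a* m)*`, `a m* = (m a*)*`.  The four conditions below
express the equalities `(m*m)a = a = a(m*m)` and `(mm*)a = a = a(mm*)` on every fiber. -/
def FBMul.IsUnitary {𝔅 : FellBundle G} {s : G} (m : FBMul 𝔅 s) : Prop :=
  (∀ (t : G) (a : 𝔅.F t), HEq (𝔅.star' (m.R _ (𝔅.star' (m.L t a)))) a) ∧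
  (∀ (t : G) (a : 𝔅.F t), HEq (m.R _ (𝔅.star' (m.L _ (𝔅.star' a)))) a) ∧
  (∀ (t : G) (a : 𝔅.F t), HEq (m.L _ (𝔅.star' (m.R _ (𝔅.star' a)))) a) ∧
  (∀ (t : G) (a : 𝔅.F t), HEq (𝔅.star' (m.L _ (𝔅.star' (m.R t a)))) a)

/-- A (topologically graded style) realization of a C*-algebra `A` as a cross sectional
algebra of the Fell bundle `𝔅`: isometric linear embeddings of the fibers with densely
spanning ranges, intertwining the bundle operations with those of `A`. -/
structure CrossSectional (𝔅 : FellBundle G) (A : Type) [NonUnitalCStarAlgebra A] where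
  ι : ∀ s, 𝔅.F s → A
  ι_add : ∀ s (a b : 𝔅.F s), ι s (a + b) = ι s a + ι s b
  ι_smul : ∀ s (z : ℂ) (a : 𝔅.F s), ι s (z • a) = z • ι s a
  ι_norm : ∀ s (a : 𝔅.F s), ‖ι s a‖ = ‖a‖
  ι_mul : ∀ (s t : G) (a : 𝔅.F s) (b : 𝔅.F t), ι (s*t) (𝔅.mul a b) = ι s a * ι t b
  ι_star : ∀ (s : G) (a : 𝔅.F s), ι s⁻¹ (𝔅.star' a) = star (ι s a)
  dense' : Dense (↑(Submodule.span ℂ (⋃ s, Set.range (ι s))) : Set A)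

/-- A representation of a Fell bundle in a C*-algebra `B`. -/
structure BundleRep (𝔅 : FellBundle G) (B : Type) [NonUnitalCStarAlgebra B] where
  ρ : ∀ s, 𝔅.F s → B
  ρ_add : ∀ s (a b : 𝔅.F s), ρ s (a + b) = ρ s a + ρ s b
  ρ_smul : ∀ s (z : ℂ) (a : 𝔅.F s), ρ s (z • a) = z • ρ s a
  ρ_norm_le : ∀ s (a : 𝔅.F s), ‖ρ s a‖ ≤ ‖a‖
  ρ_mul : ∀ (s t : G) (a : 𝔅.F s) (b : 𝔅.F t), ρ (s*t) (𝔅.mul a b) = ρ s a * ρ t b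
  ρ_star : ∀ (s : G) (a : 𝔅.F s), ρ s⁻¹ (𝔅.star' a) = star (ρ s a)

/-- A realization of the *full* cross sectional algebra `C*(𝔅)`: a cross sectional
algebra which is universal for representations of the bundle. -/
structure FullCS (𝔅 : FellBundle G) (A : Type) [NonUnitalCStarAlgebra A]
    extends CrossSectional 𝔅 A where
  univ : ∀ (B : CStarAlg) (ρ : BundleRep 𝔅 B.carrier),
    ∃ Φ : A →⋆ₙₐ[ℂ] B.carrier, Continuous Φ ∧ ∀ s a, Φ (ι s a) = ρ.ρ s a

/-- A realization of the *reduced* cross sectional algebra `C*_r(𝔅)`: a topologically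
graded cross sectional algebra whose conditional expectation onto the unit fiber is
faithful. -/
structure ReducedCS (𝔅 : FellBundle G) (A : Type) [NonUnitalCStarAlgebra A]
    extends CrossSectional 𝔅 A where
  E : A →L[ℂ] A
  E_norm : ‖E‖ ≤ 1
  E_unit : ∀ a : 𝔅.F 1, E (ι 1 a) = ι 1 a
  E_zero : ∀ s : G, s ≠ 1 → ∀ a : 𝔅.F s, E (ι s a) = 0
  E_faithful : ∀ x : A, E (star x * x) = 0 → x = 0

/-- A topologically graded cross sectional algebra of `𝔅`. -/
structure TopGradedCS (𝔅 : FellBundle G) (A : Type) [NonUnitalCStarAlgebra A]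
    extends CrossSectional 𝔅 A where
  E : A →L[ℂ] A
  E_norm : ‖E‖ ≤ 1
  E_unit : ∀ a : 𝔅.F 1, E (ι 1 a) = ι 1 a
  E_zero : ∀ s : G, s ≠ 1 → ∀ a : 𝔅.F s, E (ι s a) = 0

/-- The range of a fiber embedding, as a subspace of the cross sectional algebra. -/
def CrossSectional.fiberSub {𝔅 : FellBundle G} {A : Type} [NonUnitalCStarAlgebra A]
    (cs : CrossSectional 𝔅 A) (s : G) : Submodule ℂ A where
  carrier := Set.range (cs.ι s)
  add_mem' := by rintro a b ⟨x, rfl⟩ ⟨y, rfl⟩; exact ⟨x + y, cs.ι_add s x y⟩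
  zero_mem' := by
    refine ⟨0, ?_⟩
    have h := cs.ι_smul s 0 0
    simpa using h
  smul_mem' := by rintro z a ⟨x, rfl⟩; exact ⟨z • x, cs.ι_smul s z x⟩

/-- The full group C*-algebra `C*(G)`: a unital C*-algebra generated by a unitary
representation of `G` which is universal for unitary representations of `G`. -/
structure GroupCStar (G : Type) [Group G] : Type 1 where
  alg : Type
  [inst : CStarAlgebra alg]
  u : G →* alg
  u_star : ∀ s, star (u s) = u s⁻¹
  dense' : Dense (↑(Submodule.span ℂ (Set.range u)) : Set alg)
  univ : ∀ (B : Type) [CStarAlgebra B] (v : G →* B), (∀ s, star (v s) = v s⁻¹) →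
    ∃ Φ : alg →⋆ₐ[ℂ] B, ∀ s, Φ (u s) = v s

attribute [instance] GroupCStar.inst

/-- The left regular representation of `G`: the Hilbert space `ℓ²(G)` presented via a
total orthonormal family `(e_t)_{t ∈ G}` on which `G` acts by translation. -/
structure RegularRep (G : Type) [Group G] : Type 1 where
  H : Type
  [instN : NormedAddCommGroup H]
  [instI : InnerProductSpace ℂ H]
  [instC : CompleteSpace H]
  e : G → H
  ortho : ∀ s t : G, (inner ℂ (e s) (e t) : ℂ) = if s = t then 1 else 0
  total : Dense (↑(Submodule.span ℂ (Set.range e)) : Set H)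
  lam : G → H →L[ℂ] H
  lam_e : ∀ s t : G, lam s (e t) = e (s * t)
  lam_mul : ∀ (s t : G) (x : H), lam (s * t) x = lam s (lam t x)
  lam_one : ∀ x : H, lam 1 x = x
  lam_norm : ∀ (s : G) (x : H), ‖lam s x‖ = ‖x‖

attribute [instance] RegularRep.instN RegularRep.instI RegularRep.instC

/-- The Hilbert space tensor product of two Hilbert spaces. -/
structure HilbertTensor (H K : HilbertC) : Type 1 where
  T : HilbertC
  tmul : H.carrier → K.carrier → T.carrier
  tmul_add_left : ∀ h h' k, tmul (h + h') k = tmul h k + tmul h' k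
  tmul_add_right : ∀ h k k', tmul h (k + k') = tmul h k + tmul h k'
  tmul_smul_left : ∀ (z : ℂ) h k, tmul (z • h) k = z • tmul h k
  tmul_smul_right : ∀ (z : ℂ) h k, tmul h (z • k) = z • tmul h k
  inner_tmul : ∀ h h' k k',
    (inner ℂ (tmul h k) (tmul h' k') : ℂ) = (inner ℂ h h' : ℂ) * (inner ℂ k k' : ℂ)
  total : Dense (↑(Submodule.span ℂ {x : T.carrier | ∃ h k, x = tmul h k}) : Set T.carrier)

/-- A coaction `δ : A → A ⊗ C*(G)` of a discrete group `G` on a C*-algebra `A`.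
The tensor product `A ⊗ C*(G)` is axiomatized as a C*-algebra `T` together with the
elementary tensors `el s a = a ⊗ s`, right multiplication `rmul s = · (1 ⊗ s)` by the
canonical unitaries, the slice maps `id ⊗ χ_s`, and the spatial (minimal) norm
condition;  `δ` is an injective nondegenerate *-homomorphism satisfying
`(δ ⊗ id) ∘ δ = (id ⊗ δ_G) ∘ δ`, which for discrete `G` amounts to the requirement
that the spectral subspaces `{a | δ a = a ⊗ s}` span a dense subspace of `A`. -/
structure Coaction (G : Type) [Group G] (A : Type) [NonUnitalCStarAlgebra A] :
    Type 1 where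
  CG : GroupCStar G
  T : Type
  [instT : NonUnitalCStarAlgebra T]
  el : G → A → T
  el_add : ∀ s (a b : A), el s (a + b) = el s a + el s b
  el_smul : ∀ s (z : ℂ) (a : A), el s (z • a) = z • el s a
  el_norm : ∀ s (a : A), ‖el s a‖ = ‖a‖
  el_mul : ∀ (s t : G) (a b : A), el s a * el t b = el (s * t) (a * b)
  el_star : ∀ (s : G) (a : A), star (el s a) = el s⁻¹ (star a)
  rmul : G → T → T
  rmul_add : ∀ s (x y : T), rmul s (x + y) = rmul s x + rmul s y
  rmul_smul : ∀ s (z : ℂ) (x : T), rmul s (z • x) = z • rmul s x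
  rmul_norm : ∀ s (x : T), ‖rmul s x‖ = ‖x‖
  rmul_el : ∀ (s t : G) (a : A), rmul s (el t a) = el (t * s) a
  rmul_mul : ∀ (s : G) (x y : T), rmul s (x * y) = x * rmul s y
  slice : G → T →L[ℂ] A
  slice_el : ∀ (s t : G) (a : A), slice s (el t a) = if s = t then a else 0
  slice_norm : ∀ s, ‖slice s‖ ≤ 1
  dense_el : Dense (↑(Submodule.span ℂ (⋃ s, Set.range (el s))) : Set T)
  spatial : ∀ (H K : HilbertC) (π : A →⋆ₙₐ[ℂ] (H.carrier →L[ℂ] H.carrier)),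
    Function.Injective π →
    ∀ (σ : CG.alg →⋆ₐ[ℂ] (K.carrier →L[ℂ] K.carrier)), Function.Injective σ →
    ∀ (HT : HilbertTensor H K),
      ∃ Θ : T →⋆ₙₐ[ℂ] (HT.T.carrier →L[ℂ] HT.T.carrier), Function.Injective Θ ∧
        ∀ (s : G) (a : A) (h : H.carrier) (k : K.carrier),
          Θ (el s a) (HT.tmul h k) = HT.tmul (π a h) (σ (CG.u s) k)
  δ : A →⋆ₙₐ[ℂ] T
  δ_cont : Continuous δ
  δ_inj : Function.Injective δ
  nondeg : Dense (↑(Submodule.span ℂ {x : T | ∃ (a : A) (y : T), x = δ a * y}) : Set T)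
  dense_spectral :
    Dense (↑(Submodule.span ℂ {a : A | ∃ s : G, δ a = el s a}) : Set A)

attribute [instance] Coaction.instT

namespace Coaction

variable {A : Type} [NonUnitalCStarAlgebra A] (c : Coaction G A)

lemma el_zero (s : G) : c.el s 0 = 0 := by
  have h := c.el_add s 0 0
  have h0 : c.el s (0 + 0) = c.el s 0 := by norm_num
  rw [h0] at h
  exact (add_right_injective (c.el s 0) (by simpa using h.symm)).symm

end Coaction
namespace Coaction

variable {A : Type} [NonUnitalCStarAlgebra A] (c : Coaction G A)

lemma el_isometry (s : G) : Isometry (c.el s) := by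
  apply Isometry.of_dist_eq
  intro a b
  have hsub : c.el s a - c.el s b = c.el s (a - b) := by
    have h1 : c.el s (a - b) = c.el s (a + (-1 : ℂ) • b) := by
      congr 1
      simp [sub_eq_add_neg]
    rw [h1, c.el_add, c.el_smul]
    simp [sub_eq_add_neg]
  rw [dist_eq_norm, dist_eq_norm, hsub, c.el_norm]

/-- The spectral subspace `A_s = {a ∈ A : δ(a) = a ⊗ s}` of a coaction. -/
def spectral (s : G) : Submodule ℂ A where
  carrier := {a : A | c.δ a = c.el s a}
  add_mem' := by
    intro a b ha hb
    simp only [Set.mem_setOf_eq] at *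
    rw [map_add, ha, hb, ← c.el_add]
  zero_mem' := by
    simp only [Set.mem_setOf_eq, map_zero, c.el_zero]
  smul_mem' := by
    intro z a ha
    simp only [Set.mem_setOf_eq] at *
    rw [map_smul, ha, c.el_smul]

lemma spectral_closed (s : G) : IsClosed ((c.spectral s : Set A)) := by
  have : (c.spectral s : Set A) = {a : A | c.δ a = c.el s a} := rfl
  rw [this]
  exact isClosed_eq c.δ_cont (c.el_isometry s).continuous

lemma mem_spectral {s : G} {a : A} : a ∈ c.spectral s ↔ c.δ a = c.el s a := Iff.rfl

lemma spectral_mul {s t : G} {a b : A} (ha : a ∈ c.spectral s) (hb : b ∈ c.spectral t) :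
    a * b ∈ c.spectral (s * t) := by
  rw [mem_spectral] at *
  rw [map_mul, ha, hb, c.el_mul]

lemma spectral_star {s : G} {a : A} (ha : a ∈ c.spectral s) :
    star a ∈ c.spectral s⁻¹ := by
  rw [mem_spectral] at *
  rw [map_star, ha, c.el_star]

end Coaction

/-- HEq of subtype elements in equal submodules with equal values. -/
theorem heq_submodule {A : Type} [NonUnitalCStarAlgebra A] {p q : Submodule ℂ A}
    (h : p = q) (x : ↥p) (y : ↥q) (hxy : (x : A) = (y : A)) : HEq x y := by
  subst h
  exact heq_of_eq (Subtype.ext hxy)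

namespace Coaction

variable {A : Type} [NonUnitalCStarAlgebra A] (c : Coaction G A)

/-- The Fell bundle of spectral subspaces associated to a coaction of a discrete
group. -/
def bundle : FellBundle G where
  F s := ↥(c.spectral s)
  nacg s := inferInstance
  nsp s := inferInstance
  cplt s := (c.spectral_closed s).completeSpace_coe
  mul {s t} a b := ⟨(a : A) * (b : A), c.spectral_mul a.2 b.2⟩
  star' {s} a := ⟨star (a : A), c.spectral_star a.2⟩
  add_mul' := by intros; apply Subtype.ext; simp [add_mul]
  mul_add' := by intros; apply Subtype.ext; simp [mul_add]
  smul_mul' := by intros; apply Subtype.ext; simp [smul_mul_assoc]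
  mul_smul' := by intros; apply Subtype.ext; simp [mul_smul_comm]
  norm_mul_le' := by intros s t a b; exact norm_mul_le (a : A) (b : A)
  mul_assoc' := by
    intro s t u a b c'
    exact heq_submodule (by rw [mul_assoc]) _ _ (mul_assoc _ _ _)
  star_add' := by intros; apply Subtype.ext; simp [star_add]
  star_smul' := by intros; apply Subtype.ext; simp [star_smul]
  star_star' := by
    intro s a
    exact heq_submodule (by rw [inv_inv]) _ _ (star_star _)
  star_mul'' := by
    intro s t a b
    exact heq_submodule (by rw [mul_inv_rev]) _ _ (star_mul _ _)
  norm_star' := by intro s a; exact norm_star (a : A)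
  norm_star_mul_self' := by
    intro s a
    exact CStarRing.norm_star_mul_self (x := (a : A))

end Coaction

/-- A self-adjoint idempotent multiplier ("projection") of a C*-algebra, given by its
pair of left/right multiplication operators; used to model `j_G(χ_t) ∈ M(A ×_δ G)`. -/
structure MProj (C : Type) [NonUnitalCStarAlgebra C] where
  L : C →L[ℂ] C
  R : C →L[ℂ] C
  assoc : ∀ x y : C, R x * y = x * L y
  sa : ∀ x : C, star (L x) = R (star x)
  idemL : ∀ x : C, L (L x) = L x
  idemR : ∀ x : C, R (R x) = R x
  mulL : ∀ x y : C, L (x * y) = L x * y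
  mulR : ∀ x y : C, R (x * y) = x * R y

/-- A covariant representation `(π, μ)` of a grading `fib` of `A` (the spectral
subspaces of a coaction) in a C*-algebra `C`:  `π` is a nondegenerate
*-homomorphism and `μ` is given by the orthogonal family of projections
`p t = μ(χ_t)` summing strictly to `1`, subject to the covariance condition
`π(a_s) μ(χ_t) = μ(χ_{st}) π(a_s)`. -/
structure CovPair {A : Type} [NonUnitalCStarAlgebra A] (fib : G → Submodule ℂ A)
    (C : Type) [NonUnitalCStarAlgebra C] where
  π : A →⋆ₙₐ[ℂ] C
  nondeg : Dense (↑(Submodule.span ℂ {x : C | ∃ (a : A) (y : C), x = π a * y}) : Set C)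
  p : G → MProj C
  orth : ∀ s t : G, s ≠ t → ∀ x : C, (p s).L ((p t).L x) = 0
  total : ∀ x : C, (∀ t : G, (p t).R x = 0) → x = 0
  covL : ∀ (s t : G) (a : A), a ∈ fib s → ∀ x : C,
    π a * (p t).L x = (p (s * t)).L (π a * x)
  covR : ∀ (s t : G) (a : A), a ∈ fib s → ∀ x : C,
    (p t).R (x * π a) = ((p (s * t)).R x) * π a

/-- The element `π(a)·μ(χ_t)` of a covariant pair. -/
def CovPair.gen {A : Type} [NonUnitalCStarAlgebra A] {fib : G → Submodule ℂ A}
    {C : Type} [NonUnitalCStarAlgebra C] (ρ : CovPair fib C) (a : A) (t : G) : C :=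
  (ρ.p t).R (ρ.π a)

/-- The crossed product `A ×_δ G` of a coaction with spectral subspaces `fib`:
a C*-algebra generated by a universal covariant pair `(j_A, j_G)`. -/
structure CrossedProduct {A : Type} [NonUnitalCStarAlgebra A]
    (fib : G → Submodule ℂ A) : Type 1 where
  C : Type
  [instC : NonUnitalCStarAlgebra C]
  j : CovPair fib C
  gen_dense : Dense (↑(Submodule.span ℂ
    {x : C | ∃ (s t : G) (a : A), a ∈ fib s ∧ x = j.gen a t}) : Set C)
  univ : ∀ (B : CStarAlg) (ρ : CovPair fib B.carrier),
    ∃ Φ : C →⋆ₙₐ[ℂ] B.carrier, Continuous Φ ∧ (∀ a : A, Φ (j.π a) = ρ.π a) ∧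
      ∀ (t : G) (x : C), Φ ((j.p t).R x) = (ρ.p t).R (Φ x) ∧
        Φ ((j.p t).L x) = (ρ.p t).L (Φ x)

attribute [instance] CrossedProduct.instC

/-- A coaction is normal when `j_A` is injective on any crossed product. -/
def Coaction.Normal {A : Type} [NonUnitalCStarAlgebra A] (c : Coaction G A) : Prop :=
  ∀ cp : CrossedProduct c.spectral, Function.Injective cp.j.π

/-- A closed two-sided ideal of a C*-algebra. -/
def IsClosedIdeal {B : Type} [NonUnitalCStarAlgebra B] (I : Submodule ℂ B) : Prop :=
  IsClosed (I : Set B) ∧ (∀ (b x : B), x ∈ I → b * x ∈ I) ∧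
    (∀ (b x : B), x ∈ I → x * b ∈ I)

/-- `δ`-invariance of an ideal: `δ(I)(1 ⊗ C*(G)) = I ⊗ C*(G)`. -/
def Coaction.InvIdeal {A : Type} [NonUnitalCStarAlgebra A] (c : Coaction G A)
    (I : Submodule ℂ A) : Prop :=
  closure (↑(Submodule.span ℂ {y : c.T | ∃ (s : G), ∃ a ∈ I, y = c.rmul s (c.δ a)}) : Set c.T)
    = closure (↑(Submodule.span ℂ {y : c.T | ∃ (s : G), ∃ a ∈ I, y = c.el s a}) : Set c.T)

/-- An action of a discrete group `G` on a C*-algebra `B` by *-automorphisms. -/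
structure CAction (G : Type) [Group G] (B : Type) [NonUnitalCStarAlgebra B] where
  α : G → B → B
  map_add : ∀ s (x y : B), α s (x + y) = α s x + α s y
  map_smul : ∀ s (z : ℂ) (x : B), α s (z • x) = z • α s x
  map_mul : ∀ s (x y : B), α s (x * y) = α s x * α s y
  map_star : ∀ s (x : B), α s (star x) = star (α s x)
  α_one : ∀ x : B, α 1 x = x
  α_comp : ∀ (s t : G) (x : B), α (s * t) x = α s (α t x)
  isometric : ∀ s (x : B), ‖α s x‖ = ‖x‖

/-- The semidirect product Fell bundle `B × G` of an action, with operations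
`(b,s)(c,t) = (b α_s(c), st)` and `(b,s)* = (α_{s⁻¹}(b)*, s⁻¹)`. -/
def CAction.semidirect {B : Type} [NonUnitalCStarAlgebra B] (β : CAction G B) :
    FellBundle G where
  F _ := B
  mul {s t} a b := a * β.α s b
  star' {s} a := star (β.α s⁻¹ a)
  add_mul' := by intros s t a b c; simp [add_mul]
  mul_add' := by intros s t a b c; simp [β.map_add, mul_add]
  smul_mul' := by intros; simp [smul_mul_assoc]
  mul_smul' := by intros s t z a b; simp [β.map_smul, mul_smul_comm]
  norm_mul_le' := by
    intros s t a b
    calc ‖a * β.α s b‖ ≤ ‖a‖ * ‖β.α s b‖ := norm_mul_le _ _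
    _ = ‖a‖ * ‖b‖ := by rw [β.isometric]
  mul_assoc' := by
    intro s t u a b c
    refine heq_of_eq ?_
    show (a * β.α s b) * β.α (s * t) c = a * β.α s (b * β.α t c)
    rw [β.map_mul, β.α_comp, mul_assoc]
  star_add' := by intros; simp [β.map_add, star_add]
  star_smul' := by intros; simp [β.map_smul, star_smul]
  star_star' := by
    intro s a
    refine heq_of_eq ?_
    show star (β.α (s⁻¹)⁻¹ (star (β.α s⁻¹ a))) = a
    rw [inv_inv, ← β.map_star, star_star, ← β.α_comp, mul_inv_cancel, β.α_one]
  star_mul'' := by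
    intro s t a b
    refine heq_of_eq ?_
    show star (β.α (s*t)⁻¹ (a * β.α s b)) = star (β.α t⁻¹ b) * β.α t⁻¹ (star (β.α s⁻¹ a))
    have h1 : (s*t)⁻¹ * s = t⁻¹ := by group
    have h2 : t⁻¹ * s⁻¹ = (s*t)⁻¹ := by group
    simp only [β.map_mul, star_mul, ← β.map_star, ← β.α_comp, h1, h2]
  norm_star' := by
    intro s a
    show ‖star (β.α s⁻¹ a)‖ = ‖a‖
    rw [norm_star, β.isometric]
  norm_star_mul_self' := by
    intro s a
    show ‖star (β.α s⁻¹ a) * β.α s⁻¹ a‖ = ‖a‖ * ‖a‖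
    rw [CStarRing.norm_star_mul_self, β.isometric]

/-- A unitary multiplier of a C*-algebra `B`, given by its pair `(L, R)` of left and
right multiplication maps; the four conditions express `m* m = m m* = 1` with
`m* a = (a* m)*` and `a m* = (m a*)*`. -/
structure UMul (B : Type) [NonUnitalCStarAlgebra B] where
  L : B → B
  R : B → B
  assoc : ∀ x y : B, R x * y = x * L y
  mulL : ∀ x y : B, L (x * y) = L x * y
  mulR : ∀ x y : B, R (x * y) = x * R y
  u1 : ∀ x : B, star (R (star (L x))) = x
  u2 : ∀ x : B, R (star (L (star x))) = x
  u3 : ∀ x : B, L (star (R (star x))) = x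
  u4 : ∀ x : B, star (L (star (R x))) = x

/-- A Green twist for an action `β` of `G` over a normal subgroup `N`: a homomorphism
`τ : N → UM(B)` satisfying `α_s(τ_n) = τ_{sns⁻¹}` and `α_n = Ad τ_n`. -/
structure Twist {B : Type} [NonUnitalCStarAlgebra B] (β : CAction G B)
    (N : Subgroup G) [hN : N.Normal] where
  τ : N → UMul B
  τ_mul_L : ∀ (n m : N) (x : B), (τ (n * m)).L x = (τ n).L ((τ m).L x)
  τ_mul_R : ∀ (n m : N) (x : B), (τ (n * m)).R x = (τ m).R ((τ n).R x)
  τ_one_L : ∀ x : B, (τ 1).L x = x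
  τ_one_R : ∀ x : B, (τ 1).R x = x
  equivar_L : ∀ (s : G) (n : N) (x : B),
    β.α s ((τ n).L x) = (τ ⟨s * n * s⁻¹, hN.conj_mem n n.2 s⟩).L (β.α s x)
  equivar_R : ∀ (s : G) (n : N) (x : B),
    β.α s ((τ n).R x) = (τ ⟨s * n * s⁻¹, hN.conj_mem n n.2 s⟩).R (β.α s x)
  inner : ∀ (n : N) (x : B), β.α n x = (τ n).L ((τ n⁻¹).R x)

/-- A presentation of a Fell bundle `𝔇` over `G/N` as the twisted semidirect product
bundle `B ×_N G`: the maps `ψ s : B → 𝔇.F sN`, `b ↦ [b,s]`, are onto the fibers and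
implement the orbit-space structure of the quotient of `B × G` by the `N`-action
`(b,s)·n = (bτ_n, n⁻¹s)`. -/
structure TwistedSemidirectData {B : Type} [NonUnitalCStarAlgebra B]
    (β : CAction G B) (N : Subgroup G) [hN : N.Normal] (tw : Twist β N)
    (𝔇 : FellBundle (G ⧸ N)) where
  ψ : ∀ s : G, B → 𝔇.F (↑s)
  ψ_add : ∀ (s : G) (b b' : B), ψ s (b + b') = ψ s b + ψ s b'
  ψ_smul : ∀ (s : G) (z : ℂ) (b : B), ψ s (z • b) = z • ψ s b
  ψ_norm : ∀ (s : G) (b : B), ‖ψ s b‖ = ‖b‖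
  ψ_surj : ∀ s : G, Function.Surjective (ψ s)
  ψ_inj : ∀ s : G, Function.Injective (ψ s)
  ψ_orbit : ∀ (n : N) (s : G) (b : B), HEq (ψ ((n : G) * s) b) (ψ s ((tw.τ n).R b))
  ψ_mul : ∀ (s t : G) (b c : B), HEq (𝔇.mul (ψ s b) (ψ t c)) (ψ (s * t) (b * β.α s c))
  ψ_star : ∀ (s : G) (b : B), HEq (𝔇.star' (ψ s b)) (ψ s⁻¹ (star (β.α s⁻¹ b)))

/-- An imprimitivity (Morita equivalence) bimodule between two C*-algebras. -/
structure ImpBimod (A B : Type) [NonUnitalCStarAlgebra A] [NonUnitalCStarAlgebra B] :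
    Type 1 where
  X : Type
  [instX : NormedAddCommGroup X]
  [instM : NormedSpace ℂ X]
  [instCp : CompleteSpace X]
  actL : A → X → X
  actR : X → B → X
  actL_add_left : ∀ (a a' : A) (x : X), actL (a + a') x = actL a x + actL a' x
  actL_add_right : ∀ (a : A) (x y : X), actL a (x + y) = actL a x + actL a y
  actL_smul : ∀ (z : ℂ) (a : A) (x : X), actL (z • a) x = z • actL a x
  actL_mul : ∀ (a a' : A) (x : X), actL (a * a') x = actL a (actL a' x)
  actR_add_left : ∀ (x y : X) (b : B), actR (x + y) b = actR x b + actR y b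
  actR_add_right : ∀ (x : X) (b b' : B), actR x (b + b') = actR x b + actR x b'
  actR_smul : ∀ (z : ℂ) (x : X) (b : B), actR x (z • b) = z • actR x b
  actR_mul : ∀ (x : X) (b b' : B), actR x (b * b') = actR (actR x b) b'
  actLR_comm : ∀ (a : A) (x : X) (b : B), actL a (actR x b) = actR (actL a x) b
  ipL : X → X → A
  ipR : X → X → B
  ipL_add_left : ∀ x y z : X, ipL (x + y) z = ipL x z + ipL y z
  ipL_add_right : ∀ x y z : X, ipL x (y + z) = ipL x y + ipL x z
  ipL_smul_left : ∀ (c : ℂ) (x y : X), ipL (c • x) y = c • ipL x y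
  ipL_smul_right : ∀ (c : ℂ) (x y : X), ipL x (c • y) = conj c • ipL x y
  ipL_star : ∀ x y : X, star (ipL x y) = ipL y x
  ipL_act : ∀ (a : A) (x y : X), ipL (actL a x) y = a * ipL x y
  ipR_add_left : ∀ x y z : X, ipR (x + y) z = ipR x z + ipR y z
  ipR_add_right : ∀ x y z : X, ipR x (y + z) = ipR x y + ipR x z
  ipR_smul_left : ∀ (c : ℂ) (x y : X), ipR (c • x) y = conj c • ipR x y
  ipR_smul_right : ∀ (c : ℂ) (x y : X), ipR x (c • y) = c • ipR x y
  ipR_star : ∀ x y : X, star (ipR x y) = ipR y x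
  ipR_act : ∀ (x y : X) (b : B), ipR x (actR y b) = ipR x y * b
  compat : ∀ x y z : X, actL (ipL x y) z = actR x (ipR y z)
  ipL_pos : ∀ x : X, ∃ a : A, ipL x x = star a * a
  ipR_pos : ∀ x : X, ∃ b : B, ipR x x = star b * b
  norm_ipL : ∀ x : X, ‖x‖ ^ 2 = ‖ipL x x‖
  norm_ipR : ∀ x : X, ‖x‖ ^ 2 = ‖ipR x x‖
  full_left : Dense (↑(Submodule.span ℂ {a : A | ∃ x y : X, a = ipL x y}) : Set A)
  full_right : Dense (↑(Submodule.span ℂ {b : B | ∃ x y : X, b = ipR x y}) : Set B)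

attribute [instance] ImpBimod.instX ImpBimod.instM ImpBimod.instCp

/-- Morita equivalence of C*-algebras (existence of an imprimitivity bimodule). -/
def MoritaEq (A B : Type) [NonUnitalCStarAlgebra A] [NonUnitalCStarAlgebra B] : Prop :=
  Nonempty (ImpBimod A B)

/-- `c` is the dual coaction on the cross sectional algebra `cs`: it maps each fiber
element `a_s` to `a_s ⊗ s`, i.e. the fibers land in the spectral subspaces. -/
def IsDualCoaction {𝔅 : FellBundle G} {A : Type} [NonUnitalCStarAlgebra A]
    (cs : CrossSectional 𝔅 A) (c : Coaction G A) : Prop :=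
  ∀ (s : G) (a : 𝔅.F s), cs.ι s a ∈ c.spectral s

/-- Exel's approximation property (EP) for a Fell bundle over a discrete group:
a uniformly bounded net of finitely supported `A_e`-valued functions `f_i` with
`∑_s f_i(ts)* a_t f_i(s) → a_t` for every `a_t ∈ A_t`. -/
def FellBundle.HasEP (𝒜 : FellBundle G) : Prop :=
  ∃ C : ℝ, 0 ≤ C ∧ ∀ ε : ℝ, 0 < ε → ∀ E : Finset (Σ t : G, 𝒜.F t),
    ∃ (S : Finset G) (f : G → 𝒜.F 1),
      (∀ s ∉ S, f s = 0) ∧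
      ‖∑ s ∈ S, 𝒜.cst (by group : (1:G)⁻¹ * 1 = 1) (𝒜.mul (𝒜.star' (f s)) (f s))‖ ≤ C ∧
      ∀ p ∈ E,
        ‖(∑ s ∈ S, 𝒜.cst (by group : (1:G)⁻¹ * p.1 * 1 = p.1)
            (𝒜.mul (𝒜.mul (𝒜.star' (f (p.1 * s))) p.2) (f s))) - p.2‖ < ε

namespace S10

variable {G : Type} [Group G] {𝔅 : FellBundle G}

theorem cst_heq {s t : G} (e : s = t) (a : 𝔅.F s) : HEq (𝔅.cst e a) a := by
  subst e; rfl

theorem heqd {s t : G} (e : s = t) {a : 𝔅.F s} {b : 𝔅.F t} (h : HEq a b) :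
    𝔅.cst e a = b := by subst e; exact eq_of_heq h

theorem hnorm {s t : G} (e : s = t) {a : 𝔅.F s} {b : 𝔅.F t} (h : HEq a b) :
    ‖a‖ = ‖b‖ := by subst e; rw [eq_of_heq h]

theorem hmul {s s' t t' : G} (hs : s = s') (ht : t = t') {a : 𝔅.F s} {a' : 𝔅.F s'}
    {b : 𝔅.F t} {b' : 𝔅.F t'} (ha : HEq a a') (hb : HEq b b') :
    HEq (𝔅.mul a b) (𝔅.mul a' b') := by
  subst hs; subst ht; rw [eq_of_heq ha, eq_of_heq hb]

theorem hstar {s s' : G} (hs : s = s') {a : 𝔅.F s} {a' : 𝔅.F s'} (ha : HEq a a') :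
    HEq (𝔅.star' a) (𝔅.star' a') := by subst hs; rw [eq_of_heq ha]

theorem cst_add {s t : G} (e : s = t) (a b : 𝔅.F s) :
    𝔅.cst e (a + b) = 𝔅.cst e a + 𝔅.cst e b := by subst e; rfl

theorem cst_sub {s t : G} (e : s = t) (a b : 𝔅.F s) :
    𝔅.cst e (a - b) = 𝔅.cst e a - 𝔅.cst e b := by subst e; rfl

theorem cst_smul {s t : G} (e : s = t) (z : ℂ) (a : 𝔅.F s) :
    𝔅.cst e (z • a) = z • 𝔅.cst e a := by subst e; rfl

theorem cst_zero {s t : G} (e : s = t) : 𝔅.cst e (0 : 𝔅.F s) = 0 := by subst e; rfl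

theorem cst_norm {s t : G} (e : s = t) (a : 𝔅.F s) : ‖𝔅.cst e a‖ = ‖a‖ := by
  subst e; rfl

theorem cst_bij {s t : G} (e : s = t) : Function.Bijective (𝔅.cst e) := by
  subst e; exact Function.bijective_id

theorem sub_mul' {s t : G} (a b : 𝔅.F s) (c : 𝔅.F t) :
    𝔅.mul (a - b) c = 𝔅.mul a c - 𝔅.mul b c := by
  have h : a - b = a + (-1 : ℂ) • b := by
    rw [neg_one_smul]; exact sub_eq_add_neg a b
  rw [h, 𝔅.add_mul', 𝔅.smul_mul', neg_one_smul, ← sub_eq_add_neg]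

theorem mul_sub' {s t : G} (a : 𝔅.F s) (b c : 𝔅.F t) :
    𝔅.mul a (b - c) = 𝔅.mul a b - 𝔅.mul a c := by
  have h : b - c = b + (-1 : ℂ) • c := by
    rw [neg_one_smul]; exact sub_eq_add_neg b c
  rw [h, 𝔅.mul_add', 𝔅.mul_smul', neg_one_smul, ← sub_eq_add_neg]

theorem zero_mul' {s t : G} (b : 𝔅.F t) : 𝔅.mul (0 : 𝔅.F s) b = 0 := by
  have h := 𝔅.smul_mul' (0 : ℂ) (0 : 𝔅.F s) b
  simpa using h

theorem mul_zero' {s t : G} (a : 𝔅.F s) : 𝔅.mul a (0 : 𝔅.F t) = 0 := by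
  have h := 𝔅.mul_smul' (0 : ℂ) a (0 : 𝔅.F t)
  simpa using h

theorem left_faithful {t : G} {d : 𝔅.F t}
    (h : ∀ (w : G) (c : 𝔅.F w), 𝔅.mul c d = 0) : d = 0 := by
  have h1 : ‖d‖ * ‖d‖ = 0 := by
    rw [← 𝔅.norm_star_mul_self' d, h]; simp
  exact norm_eq_zero.mp (mul_self_eq_zero.mp h1)

theorem right_faithful {t : G} {d : 𝔅.F t}
    (h : ∀ (w : G) (c : 𝔅.F w), 𝔅.mul d c = 0) : d = 0 := by
  have hs : ‖𝔅.star' d‖ * ‖𝔅.star' d‖ = 0 := by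
    rw [← 𝔅.norm_star_mul_self' (𝔅.star' d)]
    have h2 : HEq (𝔅.mul (𝔅.star' (𝔅.star' d)) (𝔅.star' d)) (𝔅.mul d (𝔅.star' d)) :=
      hmul (by group) rfl (𝔅.star_star' d) HEq.rfl
    rw [hnorm (by group) h2, h]; simp
  have h3 := norm_eq_zero.mp (mul_self_eq_zero.mp hs)
  have h4 : ‖d‖ = 0 := by rw [← 𝔅.norm_star' d, h3, norm_zero]
  exact norm_eq_zero.mp h4

theorem heq_of_forall_mul_left {p q : G} (e : p = q) (x : 𝔅.F p) (y : 𝔅.F q)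
    (h : ∀ (w : G) (c : 𝔅.F w), HEq (𝔅.mul c x) (𝔅.mul c y)) : HEq x y := by
  subst e
  refine heq_of_eq (sub_eq_zero.mp (left_faithful (fun w c => ?_))).symm
  rw [mul_sub', sub_eq_zero]
  exact (eq_of_heq (h w c)).symm

theorem heq_of_forall_mul_right {p q : G} (e : p = q) (x : 𝔅.F p) (y : 𝔅.F q)
    (h : ∀ (w : G) (c : 𝔅.F w), HEq (𝔅.mul x c) (𝔅.mul y c)) : HEq x y := by
  subst e
  refine heq_of_eq (sub_eq_zero.mp (right_faithful (fun w c => ?_))).symm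
  rw [sub_mul', sub_eq_zero]
  exact (eq_of_heq (h w c)).symm

end S10
namespace S10

variable {G : Type} [Group G] {𝔅 : FellBundle G} {σ : G} (m : FBMul 𝔅 σ)

theorem R_cst {p q : G} (e : p = q) (y : 𝔅.F p) :
    HEq (m.R q (𝔅.cst e y)) (m.R p y) := by subst e; rfl

theorem L_cst {p q : G} (e : p = q) (y : 𝔅.F p) :
    HEq (m.L q (𝔅.cst e y)) (m.L p y) := by subst e; rfl

theorem mulL' {t u : G} (a : 𝔅.F t) (b : 𝔅.F u) :
    HEq (𝔅.mul (m.L t a) b) (m.L (t * u) (𝔅.mul a b)) := by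
  refine heq_of_forall_mul_left (by group) _ _ (fun w c => ?_)
  refine HEq.trans ((𝔅.mul_assoc' c (m.L t a) b).symm) ?_
  refine HEq.trans (hmul (by group) rfl ((m.assoc w t c a).symm) HEq.rfl) ?_
  refine HEq.trans (𝔅.mul_assoc' (m.R w c) a b) ?_
  exact m.assoc w (t * u) c (𝔅.mul a b)

theorem mulR' {t u : G} (a : 𝔅.F t) (b : 𝔅.F u) :
    HEq (𝔅.mul a (m.R u b)) (m.R (t * u) (𝔅.mul a b)) := by
  refine heq_of_forall_mul_right (by group) _ _ (fun w c => ?_)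
  refine HEq.trans (𝔅.mul_assoc' a (m.R u b) c) ?_
  refine HEq.trans (hmul rfl (by group) HEq.rfl (m.assoc u w b c)) ?_
  refine HEq.trans ((𝔅.mul_assoc' a b (m.L w c)).symm) ?_
  exact (m.assoc (t * u) w (𝔅.mul a b) c).symm

theorem L_key {t w : G} (c : 𝔅.F w) (x : 𝔅.F t) :
    𝔅.mul c (m.L t x) = 𝔅.cst (by group : w * σ * t = w * (σ * t)) (𝔅.mul (m.R w c) x) :=
  (heqd (by group) (m.assoc w t c x)).symm

theorem R_key {t w : G} (c : 𝔅.F w) (x : 𝔅.F t) :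
    𝔅.mul (m.R t x) c = 𝔅.cst (by group : t * (σ * w) = t * σ * w) (𝔅.mul x (m.L w c)) :=
  (heqd (by group) (m.assoc t w x c).symm).symm

theorem L_add (t : G) (a b : 𝔅.F t) : m.L t (a + b) = m.L t a + m.L t b := by
  refine sub_eq_zero.mp (left_faithful (fun w c => ?_))
  rw [mul_sub', 𝔅.mul_add', L_key m, L_key m, L_key m, ← cst_add, ← cst_sub,
    𝔅.mul_add', sub_self, cst_zero]

theorem L_smul (t : G) (z : ℂ) (a : 𝔅.F t) : m.L t (z • a) = z • m.L t a := by
  refine sub_eq_zero.mp (left_faithful (fun w c => ?_))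
  rw [mul_sub', 𝔅.mul_smul', L_key m, L_key m, ← cst_smul, ← cst_sub,
    𝔅.mul_smul', sub_self, cst_zero]

theorem R_add (t : G) (a b : 𝔅.F t) : m.R t (a + b) = m.R t a + m.R t b := by
  refine sub_eq_zero.mp (right_faithful (fun w c => ?_))
  rw [sub_mul', 𝔅.add_mul', R_key m, R_key m, R_key m, ← cst_add, ← cst_sub,
    𝔅.add_mul', sub_self, cst_zero]

theorem R_smul (t : G) (z : ℂ) (a : 𝔅.F t) : m.R t (z • a) = z • m.R t a := by
  refine sub_eq_zero.mp (right_faithful (fun w c => ?_))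
  rw [sub_mul', 𝔅.smul_mul', R_key m, R_key m, ← cst_smul, ← cst_sub,
    𝔅.smul_mul', sub_self, cst_zero]

theorem LstarR (hu : m.IsUnitary) {t : G} (a : 𝔅.F t) :
    HEq (m.L ((t * σ)⁻¹) (𝔅.star' (m.R t a))) (𝔅.star' a) :=
  HEq.trans ((𝔅.star_star' _).symm) (hstar (by group) (hu.2.2.2 t a))

theorem R_norm (hu : m.IsUnitary) (t : G) (a : 𝔅.F t) : ‖m.R t a‖ = ‖a‖ := by
  have h1 : HEq (𝔅.mul (𝔅.star' (𝔅.star' (m.R t a))) (𝔅.star' (m.R t a)))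
      (𝔅.mul (𝔅.star' (𝔅.star' a)) (𝔅.star' a)) := by
    refine HEq.trans (hmul (by group) rfl (𝔅.star_star' _) HEq.rfl) ?_
    refine HEq.trans (m.assoc _ _ a _) ?_
    refine HEq.trans (hmul rfl (by group) HEq.rfl (LstarR m hu a)) ?_
    exact hmul (by group) rfl (𝔅.star_star' a).symm HEq.rfl
  have h2 : ‖m.R t a‖ * ‖m.R t a‖ = ‖a‖ * ‖a‖ := by
    rw [← 𝔅.norm_star' (m.R t a), ← 𝔅.norm_star_mul_self' (𝔅.star' (m.R t a)),
      hnorm (by group) h1, 𝔅.norm_star_mul_self' (𝔅.star' a), 𝔅.norm_star' a]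
  exact mul_self_inj (norm_nonneg _) (norm_nonneg _) |>.mp h2

theorem R_bij (hu : m.IsUnitary) (t : G) : Function.Bijective (m.R t) := by
  constructor
  · intro a b hab
    have h4a := hu.2.2.2 t a
    have h4b := hu.2.2.2 t b
    rw [hab] at h4a
    exact eq_of_heq (h4a.symm.trans h4b)
  · intro x
    refine ⟨𝔅.cst (by group) (𝔅.star' (m.L ((t * σ)⁻¹) (𝔅.star' x))), ?_⟩
    refine eq_of_heq (HEq.trans (R_cst m (by group) _) ?_)
    exact hu.2.1 (t * σ) x

end S10
namespace S10

section Backward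

variable {G : Type} [Group G] {N : Subgroup G} {𝔄 : FellBundle G}

/-- Chosen coset representative. -/
def rep (N : Subgroup G) (c : G ⧸ N) : G := Quotient.out c

theorem rep_eq (c : G ⧸ N) : ((rep N c : G) : G ⧸ N) = c := Quotient.out_eq c

theorem mem_nn (s : G) : s⁻¹ * rep N (↑s) ∈ N :=
  QuotientGroup.eq.mp (rep_eq (N := N) (↑s)).symm

/-- The element of `N` relating `s` to the representative of its coset. -/
def nn (N : Subgroup G) (s : G) : N := ⟨s⁻¹ * rep N (↑s), mem_nn s⟩

theorem s_mul_nn (s : G) : s * ((nn N s : N) : G) = rep N (↑s) := by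
  simp [nn, mul_inv_cancel_left]

variable (u : ∀ n : N, FBMul 𝔄 (↑n : G))

/-- The canonical map from the fiber over `s` to the fiber over the representative
of its coset. -/
def psi (s : G) (a : 𝔄.F s) : 𝔄.F (rep N (↑s)) :=
  𝔄.cst (s_mul_nn s) ((u (nn N s)).R s a)

theorem psi_heq (s : G) (a : 𝔄.F s) : HEq (psi u s a) ((u (nn N s)).R s a) :=
  cst_heq _ _

theorem psi_congr {s s' : G} (hs : s = s') {a : 𝔄.F s} {a' : 𝔄.F s'} (ha : HEq a a') :
    HEq (psi u s a) (psi u s' a') := by subst hs; rw [eq_of_heq ha]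

theorem psi_add (s : G) (a b : 𝔄.F s) : psi u s (a + b) = psi u s a + psi u s b := by
  unfold psi; rw [R_add, cst_add]

theorem psi_smul (s : G) (z : ℂ) (a : 𝔄.F s) : psi u s (z • a) = z • psi u s a := by
  unfold psi; rw [R_smul, cst_smul]

/-- The package of hypotheses on `u` in Theorem 5.1. -/
structure Good (N : Subgroup G) [hN : N.Normal] (𝔄 : FellBundle G)
    (u : ∀ n : N, FBMul 𝔄 (↑n : G)) : Prop where
  unit : ∀ n : N, (u n).IsUnitary
  hom : ∀ (n m : N) (t : G) (a : 𝔄.F t),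
    HEq ((u (n * m)).L t a) ((u n).L _ ((u m).L t a)) ∧
    HEq ((u (n * m)).R t a) ((u m).R _ ((u n).R t a))
  one : ∀ (t : G) (a : 𝔄.F t), HEq ((u 1).L t a) a ∧ HEq ((u 1).R t a) a
  comm : ∀ (s : G) (n : N) (a : 𝔄.F s),
    HEq ((u n).R s a) ((u (⟨s * ↑n * s⁻¹, hN.conj_mem ↑n n.2 s⟩ : N)).L s a)

variable [hN : N.Normal]

theorem psi_norm (H : Good N 𝔄 u) (s : G) (a : 𝔄.F s) : ‖psi u s a‖ = ‖a‖ := by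
  unfold psi; rw [cst_norm, R_norm _ (H.unit _)]

theorem psi_bij (H : Good N 𝔄 u) (s : G) : Function.Bijective (psi u s) :=
  (cst_bij _).comp (R_bij _ (H.unit _) s)

theorem uR_congr {n n' : N} (h : n = n') {s s' : G} (hs : s = s')
    {a : 𝔄.F s} {a' : 𝔄.F s'} (ha : HEq a a') :
    HEq ((u n).R s a) ((u n').R s' a') := by
  subst h; subst hs; rw [eq_of_heq ha]

theorem uL_congr {n n' : N} (h : n = n') {s s' : G} (hs : s = s')
    {a : 𝔄.F s} {a' : 𝔄.F s'} (ha : HEq a a') :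
    HEq ((u n).L s a) ((u n').L s' a') := by
  subst h; subst hs; rw [eq_of_heq ha]

/-- The commutation relation in the `L → R` direction. -/
theorem comm' (H : Good N 𝔄 u) (s : G) (n : N) (a : 𝔄.F s) :
    HEq ((u n).L s a)
      ((u (⟨s⁻¹ * ↑n * s, by simpa using hN.conj_mem ↑n n.2 s⁻¹⟩ : N)).R s a) := by
  refine (HEq.trans
    (H.comm s ⟨s⁻¹ * ↑n * s, by simpa using hN.conj_mem ↑n n.2 s⁻¹⟩ a) ?_).symm
  refine uL_congr u (Subtype.ext ?_) rfl HEq.rfl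
  show s * (s⁻¹ * ↑n * s) * s⁻¹ = ↑n
  group

theorem coset_mul_right (s : G) (n : N) : ((s * (↑n : G) : G) : G ⧸ N) = ↑s := by
  rw [QuotientGroup.eq]
  simpa using N.inv_mem n.2

theorem coset_mul_left (s : G) (n : N) : (((↑n : G) * s : G) : G ⧸ N) = ↑s := by
  rw [QuotientGroup.eq]
  have h := hN.conj_mem _ (N.inv_mem n.2) s⁻¹
  simpa [mul_assoc] using h

/-- Right orbit lemma. -/
theorem lemA (H : Good N 𝔄 u) (s : G) (n : N) (a : 𝔄.F s) :
    HEq (psi u (s * ↑n) ((u n).R s a)) (psi u s a) := by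
  refine HEq.trans (psi_heq u _ _) ?_
  refine HEq.trans ((H.hom n (nn N (s * ↑n)) s a).2.symm) ?_
  refine HEq.trans (uR_congr u ?_ rfl HEq.rfl) (psi_heq u s a).symm
  refine Subtype.ext ?_
  show (↑n : G) * ((s * ↑n)⁻¹ * rep N (↑(s * (↑n : G)))) = s⁻¹ * rep N (↑s)
  rw [coset_mul_right s n]
  group

/-- Left orbit lemma. -/
theorem lemA' (H : Good N 𝔄 u) (s : G) (n : N) (a : 𝔄.F s) :
    HEq (psi u ((↑n : G) * s) ((u n).L s a)) (psi u s a) := by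
  refine HEq.trans
    (psi_congr u (show (↑n : G) * s = s * (s⁻¹ * ↑n * s) by group) (comm' u H s n a)) ?_
  exact lemA u H s ⟨s⁻¹ * ↑n * s, by simpa using hN.conj_mem ↑n n.2 s⁻¹⟩ a

theorem lemB (H : Good N 𝔄 u) (c : G ⧸ N) (a : 𝔄.F (rep N c)) :
    HEq (psi u (rep N c) a) a := by
  refine HEq.trans (psi_heq u _ _) ?_
  refine HEq.trans (uR_congr u (n' := 1) ?_ rfl HEq.rfl) ((H.one _ a).2)
  refine Subtype.ext ?_
  show (rep N c)⁻¹ * rep N (↑(rep N c)) = ((1 : N) : G)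
  rw [rep_eq]
  simp

theorem lemC (H : Good N 𝔄 u) (s t : G) (a : 𝔄.F s) (b : 𝔄.F t) :
    HEq (psi u (rep N (↑s) * t) (𝔄.mul (psi u s a) b)) (psi u (s * t) (𝔄.mul a b)) := by
  set n := nn N s with hn
  set mEl : N := ⟨s * ↑n * s⁻¹, hN.conj_mem ↑n n.2 s⟩ with hm
  have h1 : HEq (psi u s a) ((u mEl).L s a) :=
    HEq.trans (psi_heq u s a) (H.comm s n a)
  have h2 : HEq (𝔄.mul (psi u s a) b) ((u mEl).L (s * t) (𝔄.mul a b)) := by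
    refine HEq.trans (hmul ?_ rfl h1 HEq.rfl) (mulL' (u mEl) a b)
    rw [← s_mul_nn s]
    show s * ↑n = s * ↑n * s⁻¹ * s
    group
  refine HEq.trans (psi_congr u ?_ h2) (lemA' u H (s * t) mEl (𝔄.mul a b))
  rw [← s_mul_nn s]
  show s * ↑n * t = s * ↑n * s⁻¹ * (s * t)
  group

theorem lemC' (H : Good N 𝔄 u) (s t : G) (a : 𝔄.F s) (b : 𝔄.F t) :
    HEq (psi u (s * rep N (↑t)) (𝔄.mul a (psi u t b))) (psi u (s * t) (𝔄.mul a b)) := by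
  have h2 : HEq (𝔄.mul a (psi u t b)) ((u (nn N t)).R (s * t) (𝔄.mul a b)) := by
    refine HEq.trans (hmul rfl (s_mul_nn t).symm HEq.rfl (psi_heq u t b)) ?_
    exact mulR' (u (nn N t)) a b
  refine HEq.trans (psi_congr u ?_ h2) (lemA u H (s * t) (nn N t) (𝔄.mul a b))
  rw [← s_mul_nn t]
  group

theorem lemD (H : Good N 𝔄 u) (s : G) (a : 𝔄.F s) :
    HEq (psi u ((rep N (↑s))⁻¹) (𝔄.star' (psi u s a))) (psi u s⁻¹ (𝔄.star' a)) := by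
  set n := nn N s with hn
  have h1 : HEq (𝔄.star' (psi u s a)) (𝔄.star' ((u n).R s a)) :=
    hstar (s_mul_nn s).symm (psi_heq u s a)
  refine HEq.trans (psi_congr u (by rw [← s_mul_nn s]) h1) ?_
  refine HEq.trans (lemA' u H ((s * ↑n)⁻¹) n (𝔄.star' ((u n).R s a))).symm ?_
  exact psi_congr u (by group) (LstarR (u n) (H.unit n) a)

end Backward

end S10
namespace S10

section Backward2

variable {G : Type} [Group G] {N : Subgroup G} {𝔄 : FellBundle G}

variable [hN : N.Normal]

theorem out_mul (c c' : G ⧸ N) : ((rep N c * rep N c' : G) : G ⧸ N) = c * c' := by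
  rw [QuotientGroup.mk_mul, rep_eq, rep_eq]

theorem out_inv (c : G ⧸ N) : (((rep N c)⁻¹ : G) : G ⧸ N) = c⁻¹ := by
  rw [QuotientGroup.mk_inv, rep_eq]

variable (u : ∀ n : N, FBMul 𝔄 (↑n : G))

/-- The quotient Fell bundle over `G ⧸ N` built from `𝔄` and `u`. -/
def DB (H : Good N 𝔄 u) : FellBundle (G ⧸ N) where
  F c := 𝔄.F (rep N c)
  mul {c c'} a b :=
    𝔄.cst (congrArg (rep N) (out_mul c c'))
      (psi u (rep N c * rep N c') (𝔄.mul a b))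
  star' {c} a :=
    𝔄.cst (congrArg (rep N) (out_inv c)) (psi u ((rep N c)⁻¹) (𝔄.star' a))
  add_mul' := by
    intro c c' a b x
    beta_reduce
    rw [𝔄.add_mul', psi_add, cst_add]
  mul_add' := by
    intro c c' a b x
    beta_reduce
    rw [𝔄.mul_add', psi_add, cst_add]
  smul_mul' := by
    intro c c' z a b
    beta_reduce
    rw [𝔄.smul_mul', psi_smul, cst_smul]
  mul_smul' := by
    intro c c' z a b
    beta_reduce
    rw [𝔄.mul_smul', psi_smul, cst_smul]
  norm_mul_le' := by
    intro c c' a b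
    beta_reduce
    rw [cst_norm, psi_norm u H]
    exact 𝔄.norm_mul_le' a b
  mul_assoc' := by
    intro c c' c'' a b x
    beta_reduce
    refine HEq.trans (cst_heq _ _) ?_
    refine HEq.trans ?_ (cst_heq _ _).symm
    refine HEq.trans (HEq.trans ?_ (psi_congr u (mul_assoc _ _ _) (𝔄.mul_assoc' a b x))) ?_
    · refine HEq.trans (psi_congr u (by rw [← congrArg (rep N) (out_mul c c')])
        (hmul (congrArg (rep N) (out_mul c c')).symm rfl (cst_heq _ _) HEq.rfl)) ?_
      exact lemC u H (rep N c * rep N c') (rep N c'') (𝔄.mul a b) x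
    · refine (HEq.trans (psi_congr u (by rw [← congrArg (rep N) (out_mul c' c'')])
        (hmul rfl (congrArg (rep N) (out_mul c' c'')).symm HEq.rfl (cst_heq _ _))) ?_).symm
      exact lemC' u H (rep N c) (rep N c' * rep N c'') a (𝔄.mul b x)
  star_add' := by
    intro c a b
    beta_reduce
    rw [𝔄.star_add', psi_add, cst_add]
  star_smul' := by
    intro c z a
    beta_reduce
    rw [𝔄.star_smul', psi_smul, cst_smul]
  star_star' := by
    intro c a
    beta_reduce
    refine HEq.trans (cst_heq _ _) ?_
    refine HEq.trans (psi_congr u (by rw [← congrArg (rep N) (out_inv c)])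
      (hstar (congrArg (rep N) (out_inv c)).symm (cst_heq _ _))) ?_
    refine HEq.trans (lemD u H ((rep N c)⁻¹) (𝔄.star' a)) ?_
    refine HEq.trans (psi_congr u (inv_inv _) (𝔄.star_star' a)) ?_
    exact lemB u H c a
  star_mul'' := by
    intro c c' a b
    beta_reduce
    refine HEq.trans (cst_heq _ _) ?_
    refine HEq.trans ?_ (cst_heq _ _).symm
    refine HEq.trans (HEq.trans ?_
      (psi_congr u (mul_inv_rev _ _) (𝔄.star_mul'' a b))) ?_
    · refine HEq.trans (psi_congr u (by rw [← congrArg (rep N) (out_mul c c')])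
        (hstar (congrArg (rep N) (out_mul c c')).symm (cst_heq _ _))) ?_
      exact lemD u H (rep N c * rep N c') (𝔄.mul a b)
    · refine (HEq.trans (psi_congr u (by rw [← congrArg (rep N) (out_inv c')])
        (hmul (congrArg (rep N) (out_inv c')).symm rfl (cst_heq _ _) HEq.rfl)) ?_).symm
      refine HEq.trans (lemC u H ((rep N c')⁻¹) (rep N (c⁻¹)) (𝔄.star' b)
        (𝔄.cst (congrArg (rep N) (out_inv c)) (psi u ((rep N c)⁻¹) (𝔄.star' a)))) ?_
      refine HEq.trans (psi_congr u (by rw [← congrArg (rep N) (out_inv c)])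
        (hmul rfl (congrArg (rep N) (out_inv c)).symm HEq.rfl (cst_heq _ _))) ?_
      exact lemC' u H ((rep N c')⁻¹) ((rep N c)⁻¹) (𝔄.star' b) (𝔄.star' a)
  norm_star' := by
    intro c a
    beta_reduce
    rw [cst_norm, psi_norm u H, 𝔄.norm_star']
  norm_star_mul_self' := by
    intro c a
    beta_reduce
    rw [cst_norm]
    have h1 : HEq
        (psi u (rep N (c⁻¹) * rep N c)
          (𝔄.mul (𝔄.cst (congrArg (rep N) (out_inv c)) (psi u ((rep N c)⁻¹) (𝔄.star' a))) a))
        (psi u ((rep N c)⁻¹ * rep N c) (𝔄.mul (𝔄.star' a) a)) := by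
      refine HEq.trans (psi_congr u (by rw [← congrArg (rep N) (out_inv c)])
        (hmul (congrArg (rep N) (out_inv c)).symm rfl (cst_heq _ _) HEq.rfl)) ?_
      exact lemC u H ((rep N c)⁻¹) (rep N c) (𝔄.star' a) a
    rw [hnorm (congrArg (rep N) (by simp [rep_eq])) h1, psi_norm u H,
      𝔄.norm_star_mul_self']

/-- The isomorphism from `𝔄` to the pull-back of the quotient bundle. -/
def backIso (H : Good N 𝔄 u) : FellBundleIso 𝔄 (FellBundle.pullback N (DB u H)) where
  φ s a := psi u s a
  φ_add := psi_add u
  φ_smul s z a := psi_smul u s z a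
  φ_norm := psi_norm u H
  φ_bij := psi_bij u H
  φ_mul := by
    intro s t a b
    refine (eq_of_heq ?_).symm
    refine HEq.trans (cst_heq _ _) ?_
    refine HEq.trans (lemC u H s (rep N (↑t : G ⧸ N)) a (psi u t b)) ?_
    exact lemC' u H s t a b
  φ_star := by
    intro s a
    refine (eq_of_heq ?_).symm
    refine HEq.trans (cst_heq _ _) ?_
    exact lemD u H s a

end Backward2

end S10
namespace S10

section Forward

variable {G : Type} [Group G] {N : Subgroup G} [hN : N.Normal]
variable {𝔇 : FellBundle (G ⧸ N)} {𝔄 : FellBundle G}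
variable (iso : FellBundleIso 𝔄 (FellBundle.pullback N 𝔇))

/-- Transport in `𝔇` along `↑(n * t) = ↑t`. -/
def vL (n : N) (t : G) (x : 𝔇.F (↑t : G ⧸ N)) : 𝔇.F (↑((↑n : G) * t) : G ⧸ N) :=
  𝔇.cst (coset_mul_left t n).symm x

/-- Transport in `𝔇` along `↑(t * n) = ↑t`. -/
def vR (n : N) (t : G) (x : 𝔇.F (↑t : G ⧸ N)) : 𝔇.F (↑(t * (↑n : G)) : G ⧸ N) :=
  𝔇.cst (coset_mul_right t n).symm x

theorem vL_heq (n : N) (t : G) (x : 𝔇.F (↑t : G ⧸ N)) : HEq (vL n t x) x :=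
  cst_heq _ _

theorem vR_heq (n : N) (t : G) (x : 𝔇.F (↑t : G ⧸ N)) : HEq (vR n t x) x :=
  cst_heq _ _

/-- Inverse of the fiber maps of the isomorphism. -/
def phinv (s : G) : (FellBundle.pullback N 𝔇).F s → 𝔄.F s :=
  Function.invFun (iso.φ s)

theorem phinv_right (s : G) (x : (FellBundle.pullback N 𝔇).F s) :
    iso.φ s (phinv iso s x) = x :=
  Function.rightInverse_invFun (iso.φ_bij s).2 x

theorem pstar_heq {p : G} (x : (FellBundle.pullback N 𝔇).F p) :
    (FellBundle.pullback N 𝔇).star' x = 𝔇.star' x := rfl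

theorem heq_of_phi {p q : G} (e : p = q) {x : 𝔄.F p} {y : 𝔄.F q}
    (h : HEq (iso.φ p x) (iso.φ q y)) : HEq x y := by
  subst e
  exact heq_of_eq ((iso.φ_bij p).1 (eq_of_heq h))

/-- The multiplier of order `n` obtained from an isomorphism with a pull-back. -/
def fwdU (n : N) : FBMul 𝔄 (↑n : G) where
  L t a := phinv iso ((↑n : G) * t) (vL n t (iso.φ t a))
  R t a := phinv iso (t * (↑n : G)) (vR n t (iso.φ t a))
  assoc := by
    intro t w a b
    beta_reduce
    refine heq_of_phi iso (by group) ?_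
    rw [iso.φ_mul, iso.φ_mul]
    exact hmul (𝔅 := 𝔇) (coset_mul_right t n) (coset_mul_left w n).symm
      ((heq_of_eq (phinv_right iso _ _)).trans (vR_heq n t (iso.φ t a)))
      ((vL_heq n w (iso.φ w b)).symm.trans (heq_of_eq (phinv_right iso _ _)).symm)

theorem fwdU_L (n : N) (t : G) (a : 𝔄.F t) :
    iso.φ ((↑n : G) * t) ((fwdU iso n).L t a) = vL n t (iso.φ t a) := by
  show iso.φ _ (phinv iso _ _) = _
  exact phinv_right iso _ _

theorem fwdU_R (n : N) (t : G) (a : 𝔄.F t) :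
    iso.φ (t * (↑n : G)) ((fwdU iso n).R t a) = vR n t (iso.φ t a) := by
  show iso.φ _ (phinv iso _ _) = _
  exact phinv_right iso _ _

theorem goodFwd : Good N 𝔄 (fwdU iso) := by
  constructor
  · -- unitarity
    intro n
    refine ⟨fun t a => ?_, fun t a => ?_, fun t a => ?_, fun t a => ?_⟩
    · refine heq_of_phi iso (by group) ?_
      rw [iso.φ_star, fwdU_R, iso.φ_star, fwdU_L]
      have hq : (((((↑n : G) * t)⁻¹ * ↑n : G)) : G ⧸ N) = ((t : G) : G ⧸ N)⁻¹ := by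
        rw [coset_mul_right]
        exact congrArg Inv.inv (coset_mul_left t n)
      refine HEq.trans (hstar (𝔅 := 𝔇) hq
        (HEq.trans (vR_heq _ _ _) (hstar (𝔅 := 𝔇) (coset_mul_left t n) (vL_heq _ _ _)))) ?_
      exact 𝔇.star_star' (iso.φ t a)
    · refine heq_of_phi iso (by group) ?_
      rw [fwdU_R, iso.φ_star, fwdU_L, iso.φ_star]
      refine HEq.trans (vR_heq _ _ _) ?_
      refine HEq.trans (hstar (𝔅 := 𝔇) (coset_mul_left t⁻¹ n) (vL_heq _ _ _)) ?_
      exact 𝔇.star_star' (iso.φ t a)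
    · refine heq_of_phi iso (by group) ?_
      rw [fwdU_L, iso.φ_star, fwdU_R, iso.φ_star]
      refine HEq.trans (vL_heq _ _ _) ?_
      refine HEq.trans (hstar (𝔅 := 𝔇) (coset_mul_right t⁻¹ n) (vR_heq _ _ _)) ?_
      exact 𝔇.star_star' (iso.φ t a)
    · refine heq_of_phi iso (by group) ?_
      rw [iso.φ_star, fwdU_L, iso.φ_star, fwdU_R]
      have hq : ((((↑n : G) * (t * ↑n)⁻¹ : G)) : G ⧸ N) = ((t : G) : G ⧸ N)⁻¹ := by
        rw [coset_mul_left]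
        exact congrArg Inv.inv (coset_mul_right t n)
      refine HEq.trans (hstar (𝔅 := 𝔇) hq
        (HEq.trans (vL_heq _ _ _) (hstar (𝔅 := 𝔇) (coset_mul_right t n) (vR_heq _ _ _)))) ?_
      exact 𝔇.star_star' (iso.φ t a)
  · -- homomorphism property
    intro n m t a
    constructor
    · refine heq_of_phi iso (by rw [Subgroup.coe_mul, mul_assoc]) ?_
      rw [fwdU_L, fwdU_L, fwdU_L]
      refine HEq.trans (vL_heq _ _ _) ?_
      exact (HEq.trans (vL_heq _ _ _) (vL_heq _ _ _)).symm
    · refine heq_of_phi iso (by rw [Subgroup.coe_mul, mul_assoc]) ?_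
      rw [fwdU_R, fwdU_R, fwdU_R]
      refine HEq.trans (vR_heq _ _ _) ?_
      exact (HEq.trans (vR_heq _ _ _) (vR_heq _ _ _)).symm
  · -- unit
    intro t a
    constructor
    · refine heq_of_phi iso (by simp) ?_
      rw [fwdU_L]
      exact vL_heq _ _ _
    · refine heq_of_phi iso (by simp) ?_
      rw [fwdU_R]
      exact vR_heq _ _ _
  · -- commutation
    intro s n a
    refine heq_of_phi iso (show s * ↑n = s * ↑n * s⁻¹ * s by group) ?_
    rw [fwdU_R, fwdU_L iso ⟨s * ↑n * s⁻¹, hN.conj_mem ↑n n.2 s⟩ s a]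
    exact HEq.trans (vR_heq _ _ _) (vL_heq _ _ _).symm

end Forward

end S10
/-- STATEMENT 10 (Theorem 5.1): a Fell bundle `𝒜` over a discrete group `G` is
isomorphic to a pull-back `q*𝒟` of a Fell bundle over `G/N` if and only if there is
a homomorphism `u` of `N` into the unitary multipliers of `𝒜` with `u_n ∈ M(A_n)`
and `a_s u_n = u_{sns⁻¹} a_s` for all `a_s ∈ A_s`, `n ∈ N`. -/
theorem stmt_10 {G : Type} [Group G] (N : Subgroup G) [hN : N.Normal]
    (𝔄 : FellBundle G) :
    (∃ 𝔇 : FellBundle (G ⧸ N), Nonempty (FellBundleIso 𝔄 (FellBundle.pullback N 𝔇)))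
    ↔
    (∃ u : ∀ n : N, FBMul 𝔄 (↑n : G),
      (∀ n : N, (u n).IsUnitary) ∧
      -- `u` is a homomorphism of `N` into `UM(𝒜)`
      (∀ (n m : N) (t : G) (a : 𝔄.F t),
        HEq ((u (n * m)).L t a) ((u n).L _ ((u m).L t a)) ∧
        HEq ((u (n * m)).R t a) ((u m).R _ ((u n).R t a))) ∧
      (∀ (t : G) (a : 𝔄.F t), HEq ((u 1).L t a) a ∧ HEq ((u 1).R t a) a) ∧
      -- (ii): `a_s u_n = u_{sns⁻¹} a_s`
      (∀ (s : G) (n : N) (a : 𝔄.F s),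
        HEq ((u n).R s a)
          ((u (⟨s * ↑n * s⁻¹, hN.conj_mem ↑n n.2 s⟩ : N)).L s a))) := by
  constructor
  · rintro ⟨𝔇, ⟨iso⟩⟩
    exact ⟨S10.fwdU iso, (S10.goodFwd iso).unit, (S10.goodFwd iso).hom,
      (S10.goodFwd iso).one, (S10.goodFwd iso).comm⟩
  · rintro ⟨u, h1, h2, h3, h4⟩
    exact ⟨S10.DB u ⟨h1, h2, h3, h4⟩, ⟨S10.backIso u ⟨h1, h2, h3, h4⟩⟩⟩
end
end

section
/- Let (B,G,N,α,τ) be a twisted action of a discrete group G twisted over the normal subgroup N. Then the semidirect product Fell bundle B×G over G is isomorphic to the pull-back q*(B×_N G) of the twisted semidirect product bundle B×_N G over G/N, via (b,s) ↦ ([b,s], s). Consequently, the dual coaction of G on the untwisted crossed product B×_α G is induced from the dual coaction of G/N on the twisted crossed product B×_{α,τ}G. -/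
noncomputable section

open scoped ComplexConjugate
open Function Set Submodule Classical
attribute [local instance] Classical.propDecidable

variable {G : Type} [Group G]

/-! ### Auxiliary material for Statement 14 -/

section Stmt14Aux

variable {B : Type} [NonUnitalCStarAlgebra B]

lemma aux_eq_zero_of_forall_mul_right {z : B} (h : ∀ y : B, z * y = 0) : z = 0 := by
  have h2 : ‖z‖ * ‖z‖ = 0 := by
    rw [← CStarRing.norm_self_mul_star, h (star z), norm_zero]
  have h3 : ‖z‖ = 0 := by nlinarith [norm_nonneg z]
  exact norm_eq_zero.mp h3

namespace UMul

variable (u : UMul B)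

lemma R_add (a b : B) : u.R (a + b) = u.R a + u.R b := by
  have key : ∀ y : B, (u.R (a + b) - (u.R a + u.R b)) * y = 0 := by
    intro y
    rw [sub_mul, add_mul, u.assoc, u.assoc, u.assoc, add_mul, sub_self]
  have := aux_eq_zero_of_forall_mul_right key
  rw [sub_eq_zero] at this
  exact this

lemma R_smul (z : ℂ) (a : B) : u.R (z • a) = z • u.R a := by
  have key : ∀ y : B, (u.R (z • a) - z • u.R a) * y = 0 := by
    intro y
    rw [sub_mul, u.assoc, smul_mul_assoc, smul_mul_assoc, u.assoc, sub_self]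
  have := aux_eq_zero_of_forall_mul_right key
  rw [sub_eq_zero] at this
  exact this

lemma L_star_R (b : B) : u.L (star (u.R b)) = star b := by
  have h := u.u4 b
  calc u.L (star (u.R b)) = star (star (u.L (star (u.R b)))) := (star_star _).symm
  _ = star b := by rw [h]

lemma R_star_L (b : B) : u.R (star (u.L b)) = star b := by
  have h := u.u1 b
  calc u.R (star (u.L b)) = star (star (u.R (star (u.L b)))) := (star_star _).symm
  _ = star b := by rw [h]

lemma R_norm (b : B) : ‖u.R b‖ = ‖b‖ := by
  have key : u.R b * star (u.R b) = b * star b := by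
    rw [u.assoc b (star (u.R b)), u.L_star_R]
  have h1 : ‖u.R b‖ * ‖u.R b‖ = ‖b‖ * ‖b‖ := by
    rw [← CStarRing.norm_self_mul_star, key, CStarRing.norm_self_mul_star]
  exact (mul_self_inj (norm_nonneg _) (norm_nonneg _)).mp h1

end UMul

variable {G : Type} [Group G] (N : Subgroup G) [hN : N.Normal]

/-- A section of the quotient map `G → G/N`. -/
def qsec (c : G ⧸ N) : G := Quotient.out c

lemma qsec_spec (c : G ⧸ N) : (↑(qsec N c) : G ⧸ N) = c := Quotient.out_eq c

/-- The `N`-part of `s` relative to the chosen section. -/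
def qnu (s : G) : N :=
  ⟨s * (qsec N (↑s : G ⧸ N))⁻¹, by
    rw [← QuotientGroup.eq_one_iff]
    show (↑s : G ⧸ N) * (↑(qsec N (↑s : G ⧸ N)))⁻¹ = 1
    rw [qsec_spec, mul_inv_cancel]⟩

lemma qnu_mul_qsec (s : G) : (↑(qnu N s) : G) * qsec N (↑s : G ⧸ N) = s := by
  show s * (qsec N (↑s : G ⧸ N))⁻¹ * qsec N (↑s : G ⧸ N) = s
  group

lemma mk_nmul (n : N) (s : G) : (↑((↑n : G) * s) : G ⧸ N) = ↑s := by
  show (↑(↑n : G) : G ⧸ N) * ↑s = ↑s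
  rw [(QuotientGroup.eq_one_iff (n : G)).mpr n.2, one_mul]

lemma qnu_nmul (n : N) (s : G) : qnu N ((↑n : G) * s) = n * qnu N s := by
  apply Subtype.ext
  show (↑n : G) * s * (qsec N (↑((↑n : G) * s) : G ⧸ N))⁻¹
      = (↑n : G) * (s * (qsec N (↑s : G ⧸ N))⁻¹)
  rw [mk_nmul, mul_assoc]

lemma qnu_qsec (c : G ⧸ N) : qnu N (qsec N c) = 1 := by
  apply Subtype.ext
  show qsec N c * (qsec N (↑(qsec N c) : G ⧸ N))⁻¹ = 1
  rw [qsec_spec, mul_inv_cancel]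

variable (β : CAction G B) (tw : Twist β N)

/-- The map `b ↦ [b,s]` identifying `B` with the fiber of the twisted semidirect
product bundle over `sN`, once the fibers are modelled on `B` via the section. -/
def tpsi (s : G) (b : B) : B := (tw.τ (qnu N s)).R b

/-- Inverse of `tpsi s`. -/
def tpsiInv (s : G) (b : B) : B := star ((tw.τ (qnu N s)).L (star b))

lemma tpsi_tpsiInv (s : G) (b : B) : tpsi N β tw s (tpsiInv N β tw s b) = b :=
  (tw.τ (qnu N s)).u2 b

lemma tpsiInv_tpsi (s : G) (b : B) : tpsiInv N β tw s (tpsi N β tw s b) = b :=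
  (tw.τ (qnu N s)).u4 b

lemma tpsi_add (s : G) (a b : B) :
    tpsi N β tw s (a + b) = tpsi N β tw s a + tpsi N β tw s b :=
  (tw.τ (qnu N s)).R_add a b

lemma tpsi_smul (s : G) (z : ℂ) (b : B) :
    tpsi N β tw s (z • b) = z • tpsi N β tw s b :=
  (tw.τ (qnu N s)).R_smul z b

lemma tpsi_norm (s : G) (b : B) : ‖tpsi N β tw s b‖ = ‖b‖ :=
  (tw.τ (qnu N s)).R_norm b

lemma tpsiInv_add (s : G) (a b : B) :
    tpsiInv N β tw s (a + b) = tpsiInv N β tw s a + tpsiInv N β tw s b := by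
  conv_lhs => rw [← tpsi_tpsiInv N β tw s a, ← tpsi_tpsiInv N β tw s b,
    ← tpsi_add, tpsiInv_tpsi]

lemma tpsiInv_smul (s : G) (z : ℂ) (b : B) :
    tpsiInv N β tw s (z • b) = z • tpsiInv N β tw s b := by
  conv_lhs => rw [← tpsi_tpsiInv N β tw s b, ← tpsi_smul, tpsiInv_tpsi]

lemma tpsiInv_norm (s : G) (b : B) : ‖tpsiInv N β tw s b‖ = ‖b‖ := by
  conv_rhs => rw [← tpsi_tpsiInv N β tw s b]
  rw [tpsi_norm]

lemma tpsi_qsec (c : G ⧸ N) (b : B) : tpsi N β tw (qsec N c) b = b := by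
  unfold tpsi
  rw [qnu_qsec]
  exact tw.τ_one_R b

/-- Orbit relation: `ψ(ns) b = ψ(s)(b τ_n)`. -/
lemma tpsi_nmul (n : N) (s : G) (b : B) :
    tpsi N β tw ((↑n : G) * s) b = tpsi N β tw s ((tw.τ n).R b) := by
  unfold tpsi
  rw [qnu_nmul, tw.τ_mul_R]

/-- The multiplication of the twisted semidirect product bundle, with all fibers
modelled on `B`. -/
def tmulF (c d : G ⧸ N) (x y : B) : B :=
  tpsi N β tw (qsec N c * qsec N d) (x * β.α (qsec N c) y)

/-- The involution of the twisted semidirect product bundle, with all fibers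
modelled on `B`. -/
def tstarF (c : G ⧸ N) (x : B) : B :=
  tpsi N β tw (qsec N c)⁻¹ (star (β.α (qsec N c)⁻¹ x))

/-- The key multiplicativity identity. -/
lemma key_mul (s t : G) (a b : B) :
    tmulF N β tw (↑s) (↑t) (tpsi N β tw s a) (tpsi N β tw t b)
      = tpsi N β tw (s * t) (a * β.α s b) := by
  set s₀ := qsec N (↑s : G ⧸ N) with hs₀
  set t₀ := qsec N (↑t : G ⧸ N) with ht₀
  set n := qnu N s with hn
  set m := qnu N t with hm
  have hs : (↑n : G) * s₀ = s := qnu_mul_qsec N s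
  have ht : (↑m : G) * t₀ = t := qnu_mul_qsec N t
  set m' : N := ⟨s₀ * (↑m : G) * s₀⁻¹, hN.conj_mem _ m.2 s₀⟩ with hm'
  have hst : s * t = (↑(n * m') : G) * (s₀ * t₀) := by
    rw [← hs, ← ht]
    show ((↑n : G) * s₀) * ((↑m : G) * t₀) = ((↑n : G) * (s₀ * (↑m : G) * s₀⁻¹)) * (s₀ * t₀)
    group
  rw [hst, tpsi_nmul]
  show tpsi N β tw (s₀ * t₀) (tpsi N β tw s a * β.α s₀ (tpsi N β tw t b))
    = tpsi N β tw (s₀ * t₀) ((tw.τ (n * m')).R (a * β.α s b))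
  congr 1
  have h1 : β.α s b = (tw.τ n).L ((tw.τ n⁻¹).R (β.α s₀ b)) := by
    rw [← hs, β.α_comp, tw.inner n (β.α s₀ b)]
  have h2 : a * β.α s b = (tw.τ n).R a * (tw.τ n⁻¹).R (β.α s₀ b) := by
    rw [h1, ← (tw.τ n).assoc]
  have h3 : (tw.τ n).R ((tw.τ n⁻¹).R (β.α s₀ b)) = β.α s₀ b := by
    rw [← tw.τ_mul_R, inv_mul_cancel, tw.τ_one_R]
  calc tpsi N β tw s a * β.α s₀ (tpsi N β tw t b)
      = (tw.τ n).R a * (tw.τ m').R (β.α s₀ b) := by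
        show (tw.τ n).R a * β.α s₀ ((tw.τ m).R b) = _
        rw [tw.equivar_R s₀ m b]
    _ = (tw.τ m').R ((tw.τ n).R a * β.α s₀ b) := by rw [(tw.τ m').mulR]
    _ = (tw.τ m').R ((tw.τ n).R ((tw.τ n).R a * (tw.τ n⁻¹).R (β.α s₀ b))) := by
        rw [(tw.τ n).mulR, h3]
    _ = (tw.τ (n * m')).R ((tw.τ n).R a * (tw.τ n⁻¹).R (β.α s₀ b)) := by
        rw [tw.τ_mul_R]
    _ = (tw.τ (n * m')).R (a * β.α s b) := by rw [← h2]

/-- Compatibility of the abstract involution with the twist. -/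
lemma star_tauR (m : N) (c : B) :
    star ((tw.τ m).R c) = (tw.τ m⁻¹).R (star (β.α (↑(m⁻¹) : G) c)) := by
  have h : β.α (↑(m⁻¹) : G) c = (tw.τ m⁻¹).L ((tw.τ m).R c) := by
    rw [tw.inner m⁻¹ c, inv_inv]
  rw [h, (tw.τ m⁻¹).R_star_L]

/-- The key star identity. -/
lemma key_star (s : G) (a : B) :
    tstarF N β tw (↑s) (tpsi N β tw s a)
      = tpsi N β tw s⁻¹ (star (β.α s⁻¹ a)) := by
  set s₀ := qsec N (↑s : G ⧸ N) with hs₀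
  set n := qnu N s with hn
  have hs : (↑n : G) * s₀ = s := qnu_mul_qsec N s
  set m : N := ⟨s₀⁻¹ * (↑n : G) * (s₀⁻¹)⁻¹, hN.conj_mem _ n.2 s₀⁻¹⟩ with hm
  have h1 : s⁻¹ = (↑(m⁻¹) : G) * s₀⁻¹ := by
    rw [← hs]
    show ((↑n : G) * s₀)⁻¹ = (s₀⁻¹ * (↑n : G) * (s₀⁻¹)⁻¹)⁻¹ * s₀⁻¹
    group
  have horb : ∀ x : B, tpsi N β tw s⁻¹ x = tpsi N β tw s₀⁻¹ ((tw.τ m⁻¹).R x) := by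
    intro x
    rw [h1, tpsi_nmul]
  rw [horb (star (β.α s⁻¹ a))]
  show tpsi N β tw s₀⁻¹ (star (β.α s₀⁻¹ (tpsi N β tw s a)))
    = tpsi N β tw s₀⁻¹ ((tw.τ m⁻¹).R (star (β.α s⁻¹ a)))
  congr 1
  have h2 : β.α s₀⁻¹ (tpsi N β tw s a) = (tw.τ m).R (β.α s₀⁻¹ a) := by
    show β.α s₀⁻¹ ((tw.τ n).R a) = _
    rw [tw.equivar_R s₀⁻¹ n a]
  have h3 : β.α s⁻¹ a = β.α (↑(m⁻¹) : G) (β.α s₀⁻¹ a) := by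
    rw [← β.α_comp, ← h1]
  rw [h2, star_tauR N β tw m (β.α s₀⁻¹ a), h3]

/-- The twisted semidirect product bundle `B ×_N G`, with all fibers modelled
on `B` via the chosen section of `G → G/N`. -/
def tsdBundle : FellBundle (G ⧸ N) where
  F _ := B
  mul {c d} x y := tmulF N β tw c d x y
  star' {c} x := tstarF N β tw c x
  add_mul' := by
    intro c d a b x
    show tmulF N β tw c d (a + b) x = tmulF N β tw c d a x + tmulF N β tw c d b x
    unfold tmulF
    rw [add_mul, tpsi_add]
  mul_add' := by
    intro c d a b x
    show tmulF N β tw c d a (b + x) = tmulF N β tw c d a b + tmulF N β tw c d a x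
    unfold tmulF
    rw [β.map_add, mul_add, tpsi_add]
  smul_mul' := by
    intro c d z a b
    show tmulF N β tw c d (z • a) b = z • tmulF N β tw c d a b
    unfold tmulF
    rw [smul_mul_assoc, tpsi_smul]
  mul_smul' := by
    intro c d z a b
    show tmulF N β tw c d a (z • b) = z • tmulF N β tw c d a b
    unfold tmulF
    rw [β.map_smul, mul_smul_comm, tpsi_smul]
  norm_mul_le' := by
    intro c d a b
    show ‖tmulF N β tw c d a b‖ ≤ ‖a‖ * ‖b‖
    unfold tmulF
    rw [tpsi_norm]
    calc ‖a * β.α (qsec N c) b‖ ≤ ‖a‖ * ‖β.α (qsec N c) b‖ := norm_mul_le _ _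
    _ = ‖a‖ * ‖b‖ := by rw [β.isometric]
  mul_assoc' := by
    intro c d e a b x
    refine heq_of_eq ?_
    show tmulF N β tw (c * d) e (tmulF N β tw c d a b) x
      = tmulF N β tw c (d * e) a (tmulF N β tw d e b x)
    set s := qsec N c with hsdef
    set t := qsec N d with htdef
    set u := qsec N e with hudef
    have hc : (↑s : G ⧸ N) = c := qsec_spec N c
    have hd : (↑t : G ⧸ N) = d := qsec_spec N d
    have he : (↑u : G ⧸ N) = e := qsec_spec N e
    have ha : a = tpsi N β tw s a := (tpsi_qsec N β tw c a).symm
    have hb : b = tpsi N β tw t b := (tpsi_qsec N β tw d b).symm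
    have hx : x = tpsi N β tw u x := (tpsi_qsec N β tw e x).symm
    have e1 : tmulF N β tw c d a b = tpsi N β tw (s * t) (a * β.α s b) := by
      conv_lhs => rw [← hc, ← hd, ha, hb]
      exact key_mul N β tw s t a b
    have e2 : tmulF N β tw d e b x = tpsi N β tw (t * u) (b * β.α t x) := by
      conv_lhs => rw [← hd, ← he, hb, hx]
      exact key_mul N β tw t u b x
    have e3 : tmulF N β tw (c * d) e (tmulF N β tw c d a b) x
        = tpsi N β tw (s * t * u) (a * β.α s b * β.α (s * t) x) := by
      rw [e1]
      conv_lhs => rw [← he, hx]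
      have : c * d = (↑(s * t) : G ⧸ N) := by rw [← hc, ← hd]; rfl
      rw [this]
      exact key_mul N β tw (s * t) u (a * β.α s b) x
    have e4 : tmulF N β tw c (d * e) a (tmulF N β tw d e b x)
        = tpsi N β tw (s * (t * u)) (a * β.α s (b * β.α t x)) := by
      rw [e2]
      conv_lhs => rw [← hc, ha]
      have : d * e = (↑(t * u) : G ⧸ N) := by rw [← hd, ← he]; rfl
      rw [this]
      exact key_mul N β tw s (t * u) a (b * β.α t x)
    rw [e3, e4, mul_assoc s t u]
    congr 1
    rw [β.map_mul, β.α_comp, mul_assoc]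
  star_add' := by
    intro c a b
    show tstarF N β tw c (a + b) = tstarF N β tw c a + tstarF N β tw c b
    unfold tstarF
    rw [β.map_add, star_add, tpsi_add]
  star_smul' := by
    intro c z a
    show tstarF N β tw c (z • a) = conj z • tstarF N β tw c a
    unfold tstarF
    rw [β.map_smul, star_smul, tpsi_smul]
    rfl
  star_star' := by
    intro c a
    refine heq_of_eq ?_
    show tstarF N β tw c⁻¹ (tstarF N β tw c a) = a
    set s := qsec N c with hsdef
    have hc : (↑s : G ⧸ N) = c := qsec_spec N c
    have ha : a = tpsi N β tw s a := (tpsi_qsec N β tw c a).symm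
    have e1 : tstarF N β tw c a = tpsi N β tw s⁻¹ (star (β.α s⁻¹ a)) := by
      conv_lhs => rw [← hc, ha]
      exact key_star N β tw s a
    have hcinv : c⁻¹ = (↑(s⁻¹) : G ⧸ N) := by rw [← hc]; rfl
    rw [e1, hcinv, key_star N β tw s⁻¹ (star (β.α s⁻¹ a))]
    rw [inv_inv, β.map_star, star_star, ← β.α_comp, mul_inv_cancel, β.α_one, ← ha]
  star_mul'' := by
    intro c d a b
    refine heq_of_eq ?_
    show tstarF N β tw (c * d) (tmulF N β tw c d a b)
      = tmulF N β tw d⁻¹ c⁻¹ (tstarF N β tw d b) (tstarF N β tw c a)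
    set s := qsec N c with hsdef
    set t := qsec N d with htdef
    have hc : (↑s : G ⧸ N) = c := qsec_spec N c
    have hd : (↑t : G ⧸ N) = d := qsec_spec N d
    have ha : a = tpsi N β tw s a := (tpsi_qsec N β tw c a).symm
    have hb : b = tpsi N β tw t b := (tpsi_qsec N β tw d b).symm
    have e1 : tmulF N β tw c d a b = tpsi N β tw (s * t) (a * β.α s b) := by
      conv_lhs => rw [← hc, ← hd, ha, hb]
      exact key_mul N β tw s t a b
    have e2 : tstarF N β tw c a = tpsi N β tw s⁻¹ (star (β.α s⁻¹ a)) := by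
      conv_lhs => rw [← hc, ha]
      exact key_star N β tw s a
    have e3 : tstarF N β tw d b = tpsi N β tw t⁻¹ (star (β.α t⁻¹ b)) := by
      conv_lhs => rw [← hd, hb]
      exact key_star N β tw t b
    have e4 : tstarF N β tw (c * d) (tmulF N β tw c d a b)
        = tpsi N β tw (s * t)⁻¹ (star (β.α (s * t)⁻¹ (a * β.α s b))) := by
      rw [e1]
      have : c * d = (↑(s * t) : G ⧸ N) := by rw [← hc, ← hd]; rfl
      rw [this]
      exact key_star N β tw (s * t) (a * β.α s b)
    have e5 : tmulF N β tw d⁻¹ c⁻¹ (tstarF N β tw d b) (tstarF N β tw c a)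
        = tpsi N β tw (t⁻¹ * s⁻¹)
            (star (β.α t⁻¹ b) * β.α t⁻¹ (star (β.α s⁻¹ a))) := by
      rw [e2, e3]
      have h1 : d⁻¹ = (↑(t⁻¹) : G ⧸ N) := by rw [← hd]; rfl
      have h2 : c⁻¹ = (↑(s⁻¹) : G ⧸ N) := by rw [← hc]; rfl
      rw [h1, h2]
      exact key_mul N β tw t⁻¹ s⁻¹ (star (β.α t⁻¹ b)) (star (β.α s⁻¹ a))
    rw [e4, e5, mul_inv_rev]
    congr 1
    have hb2 : β.α (t⁻¹ * s⁻¹) (β.α s b) = β.α t⁻¹ b := by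
      rw [← β.α_comp]
      congr 1
      group
    calc star (β.α (t⁻¹ * s⁻¹) (a * β.α s b))
        = star (β.α (t⁻¹ * s⁻¹) a * β.α (t⁻¹ * s⁻¹) (β.α s b)) := by rw [β.map_mul]
      _ = star (β.α t⁻¹ b) * star (β.α (t⁻¹ * s⁻¹) a) := by rw [hb2, star_mul]
      _ = star (β.α t⁻¹ b) * β.α t⁻¹ (star (β.α s⁻¹ a)) := by
          rw [β.map_star, ← β.α_comp]
  norm_star' := by
    intro c a
    show ‖tstarF N β tw c a‖ = ‖a‖
    unfold tstarF
    rw [tpsi_norm, norm_star, β.isometric]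
  norm_star_mul_self' := by
    intro c a
    show ‖tmulF N β tw c⁻¹ c (tstarF N β tw c a) a‖ = ‖a‖ * ‖a‖
    set s := qsec N c with hsdef
    have hc : (↑s : G ⧸ N) = c := qsec_spec N c
    have ha : a = tpsi N β tw s a := (tpsi_qsec N β tw c a).symm
    have e2 : tstarF N β tw c a = tpsi N β tw s⁻¹ (star (β.α s⁻¹ a)) := by
      conv_lhs => rw [← hc, ha]
      exact key_star N β tw s a
    have hcinv : c⁻¹ = (↑(s⁻¹) : G ⧸ N) := by rw [← hc]; rfl
    have e3 : ∀ y z : B,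
        tmulF N β tw c⁻¹ c (tpsi N β tw s⁻¹ y) (tpsi N β tw s z)
          = tpsi N β tw (s⁻¹ * s) (y * β.α s⁻¹ z) := by
      intro y z
      rw [hcinv]
      conv_lhs => rw [← hc]
      exact key_mul N β tw s⁻¹ s y z
    have e4 : tmulF N β tw c⁻¹ c (tstarF N β tw c a) a
        = tpsi N β tw (s⁻¹ * s) (star (β.α s⁻¹ a) * β.α s⁻¹ a) := by
      rw [e2]
      nth_rewrite 2 [ha]
      exact e3 (star (β.α s⁻¹ a)) a
    rw [e4, tpsi_norm, CStarRing.norm_star_mul_self, β.isometric]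

end Stmt14Aux

/-- STATEMENT 14 (Theorem 5.5, first part): for a twisted action `(B,G,N,α,τ)` of a
discrete group, the semidirect product bundle `B × G` is isomorphic to the pull-back
`q*(B ×_N G)` of the twisted semidirect product bundle, via `(b,s) ↦ ([b,s],s)`.
Consequently the (dual coaction on the) full cross sectional algebra
`B ×_α G = C*(B × G)` is also the full cross sectional algebra of the pull-back
bundle, i.e. the dual coaction of `G` on `B ×_α G` is induced from the dual coaction
of `G/N` on `B ×_{α,τ} G`. -/
theorem stmt_14 {G : Type} [Group G] (N : Subgroup G) [hN : N.Normal]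
    {B : Type} [NonUnitalCStarAlgebra B] (β : CAction G B) (tw : Twist β N) :
    ∃ (𝔇 : FellBundle (G ⧸ N)) (tsd : TwistedSemidirectData β N tw 𝔇)
      (iso : FellBundleIso β.semidirect (FellBundle.pullback N 𝔇)),
      (∀ (s : G) (b : B), iso.φ s b = tsd.ψ s b) ∧
      ∀ (CA : CStarAlg) (fcs : FullCS β.semidirect CA.carrier),
        ∃ fcs' : FullCS (FellBundle.pullback N 𝔇) CA.carrier,
          ∀ (s : G) (b : B), fcs'.ι s (iso.φ s b) = fcs.ι s b := by
  refine ⟨tsdBundle N β tw, ?_, ?_, ?_, ?_⟩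
  · exact
      { ψ := fun s b => tpsi (B := B) N β tw s b
        ψ_add := fun s b b' => tpsi_add (B := B) N β tw s b b'
        ψ_smul := fun s z b => tpsi_smul (B := B) N β tw s z b
        ψ_norm := fun s b => tpsi_norm (B := B) N β tw s b
        ψ_surj := fun s y =>
          ⟨tpsiInv (B := B) N β tw s y, tpsi_tpsiInv (B := B) N β tw s y⟩
        ψ_inj := fun s x y h => by
          have h2 := congrArg (tpsiInv (B := B) N β tw s) h
          rwa [tpsiInv_tpsi, tpsiInv_tpsi] at h2
        ψ_orbit := fun n s b => heq_of_eq (tpsi_nmul (B := B) N β tw n s b)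
        ψ_mul := fun s t b c => heq_of_eq (key_mul (B := B) N β tw s t b c)
        ψ_star := fun s b => heq_of_eq (key_star (B := B) N β tw s b) }
  · exact
      { φ := fun s b => tpsi (B := B) N β tw s b
        φ_add := fun s a b => tpsi_add (B := B) N β tw s a b
        φ_smul := fun s z a => tpsi_smul (B := B) N β tw s z a
        φ_norm := fun s a => tpsi_norm (B := B) N β tw s a
        φ_bij := fun s =>
          ⟨fun x y h => by
            have h2 := congrArg (tpsiInv (B := B) N β tw s) h
            beta_reduce at h2
            rwa [tpsiInv_tpsi (B := B) N β tw s x, tpsiInv_tpsi (B := B) N β tw s y] at h2,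
          fun y => ⟨tpsiInv (B := B) N β tw s y, tpsi_tpsiInv (B := B) N β tw s y⟩⟩
        φ_mul := fun s t a b => (key_mul (B := B) N β tw s t a b).symm
        φ_star := fun s a => (key_star (B := B) N β tw s a).symm }
  · exact fun s b => rfl
  · intro CA fcs
    refine ⟨{
      ι := fun s a => fcs.ι s (tpsiInv (B := B) N β tw s a)
      ι_add := fun s a b =>
        (congrArg (fcs.ι s) (tpsiInv_add (B := B) N β tw s a b)).trans
          (fcs.ι_add s (tpsiInv (B := B) N β tw s a) (tpsiInv (B := B) N β tw s b))
      ι_smul := fun s z a =>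
        (congrArg (fcs.ι s) (tpsiInv_smul (B := B) N β tw s z a)).trans
          (fcs.ι_smul s z (tpsiInv (B := B) N β tw s a))
      ι_norm := fun s a =>
        (fcs.ι_norm s (tpsiInv (B := B) N β tw s a)).trans
          (tpsiInv_norm (B := B) N β tw s a)
      ι_mul := fun s t a b => by
        have e1 := key_mul (B := B) N β tw s t
          (tpsiInv (B := B) N β tw s a) (tpsiInv (B := B) N β tw t b)
        rw [tpsi_tpsiInv (B := B) N β tw s a, tpsi_tpsiInv (B := B) N β tw t b] at e1
        show fcs.ι (s * t)
            (tpsiInv (B := B) N β tw (s * t) (tmulF N β tw (↑s) (↑t) a b))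
          = fcs.ι s (tpsiInv (B := B) N β tw s a) * fcs.ι t (tpsiInv (B := B) N β tw t b)
        rw [e1, tpsiInv_tpsi]
        exact fcs.ι_mul s t (tpsiInv (B := B) N β tw s a) (tpsiInv (B := B) N β tw t b)
      ι_star := fun s a => by
        have e1 := key_star (B := B) N β tw s (tpsiInv (B := B) N β tw s a)
        rw [tpsi_tpsiInv (B := B) N β tw s a] at e1
        show fcs.ι s⁻¹
            (tpsiInv (B := B) N β tw s⁻¹ (tstarF N β tw (↑s) a))
          = star (fcs.ι s (tpsiInv (B := B) N β tw s a))
        rw [e1, tpsiInv_tpsi]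
        exact fcs.ι_star s (tpsiInv (B := B) N β tw s a)
      dense' := by
        have hr : ∀ s : G,
            Set.range (fun a : B => fcs.ι s (tpsiInv (B := B) N β tw s a))
              = Set.range (fcs.ι s) := by
          intro s
          exact Function.Surjective.range_comp
            (fun y => ⟨tpsi (B := B) N β tw s y, tpsiInv_tpsi (B := B) N β tw s y⟩)
            (fcs.ι s)
        have hset :
            (⋃ s : G, Set.range (fun a : B => fcs.ι s (tpsiInv (B := B) N β tw s a)))
              = ⋃ s : G, Set.range (fcs.ι s) := Set.iUnion_congr hr
        show Dense (↑(Submodule.span ℂ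
          (⋃ s : G, Set.range (fun a : B => fcs.ι s (tpsiInv (B := B) N β tw s a))))
            : Set CA.carrier)
        rw [hset]
        exact fcs.dense'
      univ := by
        intro B' ρ
        obtain ⟨Φ, hcont, hΦ⟩ := fcs.univ B'
          { ρ := fun s b => ρ.ρ s (tpsi (B := B) N β tw s b)
            ρ_add := fun s a b =>
              (congrArg (ρ.ρ s) (tpsi_add (B := B) N β tw s a b)).trans
                (ρ.ρ_add s (tpsi (B := B) N β tw s a) (tpsi (B := B) N β tw s b))
            ρ_smul := fun s z a =>
              (congrArg (ρ.ρ s) (tpsi_smul (B := B) N β tw s z a)).trans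
                (ρ.ρ_smul s z (tpsi (B := B) N β tw s a))
            ρ_norm_le := fun s a =>
              le_of_le_of_eq (ρ.ρ_norm_le s (tpsi (B := B) N β tw s a))
                (tpsi_norm (B := B) N β tw s a)
            ρ_mul := fun s t a b =>
              (congrArg (ρ.ρ (s * t)) (key_mul (B := B) N β tw s t a b).symm).trans
                (ρ.ρ_mul s t (tpsi (B := B) N β tw s a) (tpsi (B := B) N β tw t b))
            ρ_star := fun s a =>
              (congrArg (ρ.ρ s⁻¹) (key_star (B := B) N β tw s a).symm).trans
                (ρ.ρ_star s (tpsi (B := B) N β tw s a)) }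
        exact ⟨Φ, hcont, fun s a =>
          (hΦ s (tpsiInv (B := B) N β tw s a)).trans
            (congrArg (ρ.ρ s) (tpsi_tpsiInv (B := B) N β tw s a))⟩ }, ?_⟩
    intro s b
    show fcs.ι s (tpsiInv (B := B) N β tw s (tpsi (B := B) N β tw s b)) = fcs.ι s b
    rw [tpsiInv_tpsi]
end
end

section
/- Let (B,G,β) be an action of a discrete group G on a C*-algebra B that is G-simple, i.e., B has no nontrivial closed G-invariant ideals. Then the dual coaction β̂ of G on the full crossed product B×_β G is G-simple: B×_β G has no nontrivial closed β̂-invariant ideals. -/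
noncomputable section

open scoped ComplexConjugate
open Function Set Submodule Classical
attribute [local instance] Classical.propDecidable

variable {G : Type} [Group G]

section StmtSixteenHelpers

variable {V W : Type} [NormedAddCommGroup V] [NormedSpace ℂ V]
  [NormedAddCommGroup W] [NormedSpace ℂ W]

/-- Build a continuous linear map from a bounded linear function. -/
def mkCLM (f : V → W) (hadd : ∀ x y, f (x + y) = f x + f y)
    (hsmul : ∀ (z : ℂ) (x : V), f (z • x) = z • f x)
    (C : ℝ) (hC : ∀ x, ‖f x‖ ≤ C * ‖x‖) : V →L[ℂ] W :=
  LinearMap.mkContinuous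
    { toFun := f, map_add' := hadd, map_smul' := hsmul } C hC

@[simp] lemma mkCLM_apply (f : V → W) (hadd : ∀ x y, f (x + y) = f x + f y)
    (hsmul : ∀ (z : ℂ) (x : V), f (z • x) = z • f x)
    (C : ℝ) (hC : ∀ x, ‖f x‖ ≤ C * ‖x‖) (x : V) :
    mkCLM f hadd hsmul C hC x = f x := rfl

/-- If a continuous linear map sends a generating set into a closed submodule, it sends
the closure of the span into it. -/
theorem aux_map (f : V →L[ℂ] W) {S : Set V} {Q : Submodule ℂ W}
    (hQ : IsClosed (Q : Set W)) (hS : ∀ y ∈ S, f y ∈ Q) {x : V}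
    (hx : x ∈ closure ((Submodule.span ℂ S : Submodule ℂ V) : Set V)) : f x ∈ Q := by
  have h1 : Submodule.span ℂ S ≤ Submodule.comap (f : V →ₗ[ℂ] W) Q :=
    Submodule.span_le.2 hS
  have h2 : IsClosed ((Submodule.comap (f : V →ₗ[ℂ] W) Q : Submodule ℂ V) : Set V) :=
    hQ.preimage f.continuous
  exact h2.closure_subset_iff.2 h1 hx

/-- Continuous linear maps agreeing on a set with dense span agree everywhere. -/
theorem aux_eq (f g : V →L[ℂ] W) {S : Set V}
    (hd : Dense ((Submodule.span ℂ S : Submodule ℂ V) : Set V))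
    (h : ∀ y ∈ S, f y = g y) (x : V) : f x = g x := by
  have hb : IsClosed ((⊥ : Submodule ℂ W) : Set W) := by
    rw [Submodule.bot_coe]; exact isClosed_singleton
  have := aux_map (f - g) (Q := ⊥) hb (fun y hy => by
    simp only [ContinuousLinearMap.sub_apply, Submodule.mem_bot, sub_eq_zero]
    exact h y hy) (hd x)
  simp only [ContinuousLinearMap.sub_apply, Submodule.mem_bot, sub_eq_zero] at this
  exact this

variable {G : Type} [Group G] {B : Type} [NonUnitalCStarAlgebra B]
  {CA : Type} [NonUnitalCStarAlgebra CA]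

/-- The fiber embeddings of the semidirect product bundle, as continuous linear maps. -/
def ιCLM (β : CAction G B) (fcs : FullCS β.semidirect CA) (s : G) : B →L[ℂ] CA :=
  mkCLM (fcs.ι s) (fcs.ι_add s) (fcs.ι_smul s) 1
    (fun x => by rw [one_mul]; exact (fcs.ι_norm s x).le)

/-- The automorphisms of an action, as continuous linear maps. -/
def αCLM (β : CAction G B) (s : G) : B →L[ℂ] B :=
  mkCLM (β.α s) (β.map_add s) (β.map_smul s) 1
    (fun x => by rw [β.isometric, one_mul])

/-- Left multiplication as a continuous linear map. -/
def mulLCLM (e : B) : B →L[ℂ] B :=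
  mkCLM (fun x => e * x) (fun x y => mul_add e x y)
    (fun z x => mul_smul_comm z e x) ‖e‖ (fun x => norm_mul_le e x)

/-- Right multiplication as a continuous linear map. -/
def mulRCLM (e : B) : B →L[ℂ] B :=
  mkCLM (fun x => x * e) (fun x y => add_mul x y e)
    (fun z x => smul_mul_assoc z x e) ‖e‖
    (fun x => by rw [mul_comm ‖e‖]; exact norm_mul_le x e)

/-- Right multiplication by canonical unitaries, as a continuous linear map. -/
def rmulCLM (chat : Coaction G CA) (t : G) : chat.T →L[ℂ] chat.T :=
  mkCLM (chat.rmul t) (chat.rmul_add t) (chat.rmul_smul t) 1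
    (fun x => by rw [chat.rmul_norm, one_mul])

/-- A coaction as a continuous linear map. -/
def δCLM (chat : Coaction G CA) : CA →L[ℂ] chat.T :=
  { toLinearMap :=
      { toFun := chat.δ
        map_add' := fun x y => map_add chat.δ x y
        map_smul' := fun z x => map_smul chat.δ z x }
    cont := chat.δ_cont }

/-- The spectral projections `slice s ∘ δ` of a coaction. -/
def ECLM (chat : Coaction G CA) (s : G) : CA →L[ℂ] CA :=
  (chat.slice s).comp (δCLM chat)

end StmtSixteenHelpers

/-- STATEMENT 16 (Lemma 5.7): if `(B,G,β)` is a `G`-simple action of a discrete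
group (no nontrivial closed `β`-invariant two-sided ideals), then the dual coaction
`β̂` of `G` on the full crossed product `B ×_β G = C*(B × G)` is `G`-simple: the
crossed product has no nontrivial closed `β̂`-invariant ideals, where an ideal `I` is
`β̂`-invariant when `β̂(I)(1 ⊗ C*(G)) = I ⊗ C*(G)`. -/
theorem stmt_16 {G : Type} [Group G] {B : Type} [NonUnitalCStarAlgebra B]
    (β : CAction G B)
    (hsimple : ∀ I : Submodule ℂ B, IsClosedIdeal I →
      (∀ s : G, ∀ x ∈ I, β.α s x ∈ I) → I = ⊥ ∨ I = ⊤)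
    {CA : Type} [NonUnitalCStarAlgebra CA] (fcs : FullCS β.semidirect CA)
    (chat : Coaction G CA)
    (hdual : ∀ (s : G) (b : B), fcs.ι s b ∈ chat.spectral s) :
    ∀ I : Submodule ℂ CA, IsClosedIdeal I → chat.InvIdeal I → I = ⊥ ∨ I = ⊤ := by
  intro I hI hInv
  obtain ⟨hIc, hIl, hIr⟩ := hI
  -- unfold the invariance hypothesis
  have hInv' : closure ((Submodule.span ℂ
        {y : chat.T | ∃ (s : G), ∃ a ∈ I, y = chat.rmul s (chat.δ a)} :
          Submodule ℂ chat.T) : Set chat.T)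
      = closure ((Submodule.span ℂ
        {y : chat.T | ∃ (s : G), ∃ a ∈ I, y = chat.el s a} :
          Submodule ℂ chat.T) : Set chat.T) := hInv
  -- `rmul 1` is the identity
  have hrm1 : ∀ x : chat.T, chat.rmul 1 x = x := by
    intro x
    have := aux_eq (rmulCLM chat 1) (ContinuousLinearMap.id ℂ chat.T) chat.dense_el
      (fun y hy => by
        simp only [Set.mem_iUnion, Set.mem_range] at hy
        obtain ⟨t, a, rfl⟩ := hy
        show chat.rmul 1 (chat.el t a) = chat.el t a
        rw [chat.rmul_el, mul_one]) x
    exact this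
  -- `slice u ∘ rmul t = slice (u t⁻¹)`
  have hsr : ∀ (u t : G) (x : chat.T),
      chat.slice u (chat.rmul t x) = chat.slice (u * t⁻¹) x := by
    intro u t x
    have := aux_eq ((chat.slice u).comp (rmulCLM chat t)) (chat.slice (u * t⁻¹))
      chat.dense_el (fun y hy => by
        simp only [Set.mem_iUnion, Set.mem_range] at hy
        obtain ⟨r, a, rfl⟩ := hy
        show chat.slice u (chat.rmul t (chat.el r a)) = chat.slice (u * t⁻¹) (chat.el r a)
        rw [chat.rmul_el, chat.slice_el, chat.slice_el]
        by_cases h : u = r * t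
        · rw [if_pos h, if_pos (by rw [h]; group)]
        · rw [if_neg h, if_neg (fun hc => h (by rw [← hc]; group))]) x
    exact this
  -- basic facts about the spectral projections
  have hEspec : ∀ (s t : G) (a : CA), chat.δ a = chat.el t a →
      ECLM chat s a = if s = t then a else 0 := by
    intro s t a ha
    show chat.slice s (chat.δ a) = _
    rw [ha, chat.slice_el]
  have hEmem : ∀ (s : G) (x : CA), ECLM chat s x ∈ chat.spectral s := by
    intro s x
    refine aux_map (ECLM chat s) (Q := chat.spectral s) (chat.spectral_closed s)
      ?_ (chat.dense_spectral x)
    rintro y ⟨t, ht⟩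
    rw [hEspec s t y ht]
    split_ifs with h
    · subst h; exact chat.mem_spectral.2 ht
    · exact (chat.spectral s).zero_mem
  have hEfix : ∀ (s : G) (z : CA), z ∈ chat.spectral s → ECLM chat s z = z := by
    intro s z hz
    rw [hEspec s s z (chat.mem_spectral.1 hz), if_pos rfl]
  -- spectral components of elements of `I` remain in `I`
  have hdI : ∀ (s : G) (a : CA), a ∈ I → ECLM chat s a ∈ I := by
    intro s a ha
    have h1 : chat.δ a ∈ closure ((Submodule.span ℂ
        {y : chat.T | ∃ (s : G), ∃ a ∈ I, y = chat.rmul s (chat.δ a)} :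
          Submodule ℂ chat.T) : Set chat.T) :=
      subset_closure (Submodule.subset_span ⟨1, a, ha, (hrm1 _).symm⟩)
    rw [hInv'] at h1
    refine aux_map (chat.slice s) (Q := I) hIc ?_ h1
    rintro y ⟨t, x, hx, rfl⟩
    rw [chat.slice_el]
    split_ifs
    · exact hx
    · exact I.zero_mem
  -- `I` is topologically graded over its spectral parts
  set Z : Set CA := ⋃ s : G, ((I : Set CA) ∩ (chat.spectral s : Set CA)) with hZdef
  have he : ∀ a ∈ I, a ∈ (Submodule.span ℂ Z).topologicalClosure := by
    intro a ha
    have h1 : chat.el 1 a ∈ closure ((Submodule.span ℂ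
        {y : chat.T | ∃ (s : G), ∃ a ∈ I, y = chat.el s a} :
          Submodule ℂ chat.T) : Set chat.T) :=
      subset_closure (Submodule.subset_span ⟨1, a, ha, rfl⟩)
    rw [← hInv'] at h1
    have h2 : chat.slice 1 (chat.el 1 a) ∈ (Submodule.span ℂ Z).topologicalClosure := by
      refine aux_map (chat.slice 1) (Q := (Submodule.span ℂ Z).topologicalClosure)
        (Submodule.isClosed_topologicalClosure _) ?_ h1
      rintro y ⟨t, x, hx, rfl⟩
      have h3 : chat.slice 1 (chat.rmul t (chat.δ x)) = ECLM chat t⁻¹ x := by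
        rw [hsr, one_mul]; rfl
      rw [h3]
      refine Submodule.le_topologicalClosure _ (Submodule.subset_span ?_)
      exact Set.mem_iUnion.2 ⟨t⁻¹, ⟨hdI _ _ hx, hEmem _ _⟩⟩
    rwa [chat.slice_el, if_pos rfl] at h2
  -- transport along equal indices for the fiber embeddings
  have hcast : ∀ {s t : G} (_ : s = t) (b : B), fcs.ι s b = fcs.ι t b := by
    intro s t h b; subst h; rfl
  have hι0 : ∀ s : G, fcs.ι s (0 : B) = (0 : CA) := fun s => (ιCLM β fcs s).map_zero
  have hmul2 : ∀ (s t : G) (b c : B),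
      fcs.ι s b * fcs.ι t c = fcs.ι (s * t) (b * β.α s c) :=
    fun s t b c => (fcs.ι_mul s t b c).symm
  have hmul3 : ∀ (t s : G) (b x c : B),
      fcs.ι t b * fcs.ι s x * fcs.ι (t * s)⁻¹ c
        = fcs.ι 1 (b * β.α t x * β.α (t * s) c) := by
    intro t s b x c
    rw [hmul2 t s b x, hmul2 (t * s) (t * s)⁻¹ (b * β.α t x) c]
    exact hcast (mul_inv_cancel (t * s)) _
  -- the auxiliary invariant ideal `K` of `B`
  set gensK : Set B :=
    {y | ∃ (b c : B) (t s : G) (x : B), fcs.ι s x ∈ I ∧ y = b * β.α t x * c} with hgensK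
  set K : Submodule ℂ B := (Submodule.span ℂ gensK).topologicalClosure with hKdef
  have hKcl : IsClosed (K : Set B) := Submodule.isClosed_topologicalClosure _
  have hKgen : ∀ y ∈ gensK, y ∈ K :=
    fun y hy => Submodule.le_topologicalClosure _ (Submodule.subset_span hy)
  have hKmap : ∀ (f : B →L[ℂ] B), (∀ y ∈ gensK, f y ∈ K) → ∀ x ∈ K, f x ∈ K :=
    fun f hf x hx => aux_map f hKcl hf hx
  have hKl : ∀ (e x : B), x ∈ K → e * x ∈ K := by
    intro e x hx
    refine hKmap (mulLCLM e) ?_ x hx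
    rintro y ⟨b, c, t, s, x', hx', rfl⟩
    exact hKgen _ ⟨e * b, c, t, s, x', hx',
      by show e * (b * β.α t x' * c) = e * b * β.α t x' * c
         rw [← mul_assoc, ← mul_assoc]⟩
  have hKr : ∀ (e x : B), x ∈ K → x * e ∈ K := by
    intro e x hx
    refine hKmap (mulRCLM e) ?_ x hx
    rintro y ⟨b, c, t, s, x', hx', rfl⟩
    exact hKgen _ ⟨b, c * e, t, s, x', hx',
      by show b * β.α t x' * c * e = b * β.α t x' * (c * e)
         rw [mul_assoc]⟩
  have hKinv : ∀ (r : G), ∀ x ∈ K, β.α r x ∈ K := by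
    intro r x hx
    refine hKmap (αCLM β r) ?_ x hx
    rintro y ⟨b, c, t, s, x', hx', rfl⟩
    refine hKgen _ ⟨β.α r b, β.α r c, r * t, s, x', hx', ?_⟩
    show β.α r (b * β.α t x' * c) = β.α r b * β.α (r * t) x' * β.α r c
    rw [β.map_mul, β.map_mul, β.α_comp]
  rcases hsimple K ⟨hKcl, hKl, hKr⟩ hKinv with hKbot | hKtop
  · -- `K = ⊥`: every spectral part of `I` vanishes, hence `I = ⊥`
    have hzero : ∀ (s : G) (x : B), fcs.ι s x ∈ I → x = 0 := by
      intro s x hx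
      have hg : star x * β.α 1 x * star x ∈ K :=
        hKgen _ ⟨star x, star x, 1, s, x, hx, rfl⟩
      rw [hKbot] at hg
      have h0 : star x * x * star x = 0 := by
        have := (Submodule.mem_bot ℂ).1 hg
        rwa [β.α_one] at this
      have h1 : (star x * x) * (star x * x) = 0 := by
        calc (star x * x) * (star x * x) = (star x * x * star x) * x := by
              rw [mul_assoc (star x * x), ← mul_assoc]
          _ = 0 := by rw [h0, zero_mul]
      have hsa : star (star x * x) = star x * x := by rw [star_mul, star_star]
      have h2 : ‖star x * x‖ * ‖star x * x‖ = 0 := by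
        rw [← CStarRing.norm_star_mul_self, hsa, h1, norm_zero]
      have h3 : star x * x = 0 := norm_eq_zero.1 (mul_self_eq_zero.1 h2)
      have h4 : ‖x‖ * ‖x‖ = 0 := by rw [← CStarRing.norm_star_mul_self, h3, norm_zero]
      exact norm_eq_zero.1 (mul_self_eq_zero.1 h4)
    have hspec_range : ∀ (s : G) (z : CA), z ∈ chat.spectral s →
        ∃ b : B, fcs.ι s b = z := by
      intro s z hz
      have hiso : Isometry (fcs.ι s) := by
        refine Isometry.of_dist_eq (fun a b => ?_)
        have hsub : fcs.ι s a - fcs.ι s b = fcs.ι s (a - b) :=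
          ((ιCLM β fcs s).map_sub a b).symm
        rw [dist_eq_norm, dist_eq_norm, hsub, fcs.ι_norm]
      have hran : IsClosed (Set.range (fcs.ι s)) := hiso.isClosedEmbedding.isClosed_range
      have h2 : ECLM chat s z ∈ (fcs.toCrossSectional.fiberSub s).topologicalClosure := by
        refine aux_map (ECLM chat s) (Q := (fcs.toCrossSectional.fiberSub s).topologicalClosure)
          (Submodule.isClosed_topologicalClosure _) ?_ (fcs.dense' z)
        intro y hy
        simp only [Set.mem_iUnion, Set.mem_range] at hy
        obtain ⟨t, b, rfl⟩ := hy
        rw [hEspec s t _ (chat.mem_spectral.1 (hdual t b))]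
        split_ifs with h
        · subst h
          exact Submodule.le_topologicalClosure _ ⟨b, rfl⟩
        · exact Submodule.zero_mem _
      rw [hEfix s z hz] at h2
      have h3 : z ∈ closure (Set.range (fcs.ι s)) := h2
      rw [hran.closure_eq] at h3
      exact h3
    have hZ0 : ∀ z ∈ Z, z = (0 : CA) := by
      intro z hz
      obtain ⟨s, hzI, hzs⟩ := Set.mem_iUnion.1 hz
      obtain ⟨b, hb⟩ := hspec_range s z hzs
      have hbI : fcs.ι s b ∈ I := by rw [hb]; exact hzI
      rw [← hb, hzero s b hbI, hι0]
    left
    rw [Submodule.eq_bot_iff]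
    intro a ha
    have h1 : (Submodule.span ℂ Z).topologicalClosure ≤ ⊥ := by
      refine Submodule.topologicalClosure_minimal _ (Submodule.span_le.2 ?_) ?_
      · intro z hz
        have := hZ0 z hz
        simp [this]
      · rw [Submodule.bot_coe]; exact isClosed_singleton
    exact (Submodule.mem_bot ℂ).1 (h1 (he a ha))
  · -- `K = ⊤`: `ι 1 (B) ⊆ I`, hence `I = ⊤` (or `B = 0` and `I = ⊥`)
    have hJ1 : ∀ b : B, fcs.ι 1 b ∈ I := by
      intro b
      have hgen : gensK ⊆ ((Submodule.comap ((ιCLM β fcs 1) : B →ₗ[ℂ] CA) I :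
          Submodule ℂ B) : Set B) := by
        rintro y ⟨b', c, t, s, x, hx, rfl⟩
        show fcs.ι 1 (b' * β.α t x * c) ∈ I
        obtain ⟨c', rfl⟩ : ∃ c', β.α (t * s) c' = c :=
          ⟨β.α (t * s)⁻¹ c, by rw [← β.α_comp, mul_inv_cancel, β.α_one]⟩
        rw [← hmul3]
        exact hIr _ _ (hIl _ _ hx)
      have hle : K ≤ Submodule.comap ((ιCLM β fcs 1) : B →ₗ[ℂ] CA) I :=
        Submodule.topologicalClosure_minimal _ (Submodule.span_le.2 hgen)
          (hIc.preimage (ιCLM β fcs 1).continuous)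
      have hbK : b ∈ K := by rw [hKtop]; trivial
      exact hle hbK
    -- the invariant ideal generated by products
    set gensL : Set B := {y | ∃ c d : B, y = c * d} with hgensL
    set L : Submodule ℂ B := (Submodule.span ℂ gensL).topologicalClosure with hLdef
    have hLcl : IsClosed (L : Set B) := Submodule.isClosed_topologicalClosure _
    have hLgen : ∀ y ∈ gensL, y ∈ L :=
      fun y hy => Submodule.le_topologicalClosure _ (Submodule.subset_span hy)
    have hLmap : ∀ (f : B →L[ℂ] B), (∀ y ∈ gensL, f y ∈ L) → ∀ x ∈ L, f x ∈ L :=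
      fun f hf x hx => aux_map f hLcl hf hx
    have hLl : ∀ (e x : B), x ∈ L → e * x ∈ L := by
      intro e x hx
      refine hLmap (mulLCLM e) ?_ x hx
      rintro y ⟨c, d, rfl⟩
      exact hLgen _ ⟨e * c, d, by show e * (c * d) = e * c * d; rw [mul_assoc]⟩
    have hLr : ∀ (e x : B), x ∈ L → x * e ∈ L := by
      intro e x hx
      refine hLmap (mulRCLM e) ?_ x hx
      rintro y ⟨c, d, rfl⟩
      exact hLgen _ ⟨c, d * e, by show c * d * e = c * (d * e); rw [mul_assoc]⟩
    have hLinv : ∀ (r : G), ∀ x ∈ L, β.α r x ∈ L := by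
      intro r x hx
      refine hLmap (αCLM β r) ?_ x hx
      rintro y ⟨c, d, rfl⟩
      exact hLgen _ ⟨β.α r c, β.α r d, (β.map_mul r c d)⟩
    rcases hsimple L ⟨hLcl, hLl, hLr⟩ hLinv with hLbot | hLtop
    · -- `L = ⊥` forces `B = 0`, hence `CA = 0` and `I = ⊥`
      have hB0 : ∀ b : B, b = 0 := by
        intro b
        have hsb : star b * b ∈ L := hLgen _ ⟨star b, b, rfl⟩
        rw [hLbot] at hsb
        have h0 : star b * b = 0 := (Submodule.mem_bot ℂ).1 hsb
        have h4 : ‖b‖ * ‖b‖ = 0 := by rw [← CStarRing.norm_star_mul_self, h0, norm_zero]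
        exact norm_eq_zero.1 (mul_self_eq_zero.1 h4)
      have hCA0 : ∀ a : CA, a ∈ (⊥ : Submodule ℂ CA) := by
        intro a
        have hb : IsClosed ((⊥ : Submodule ℂ CA) : Set CA) := by
          rw [Submodule.bot_coe]; exact isClosed_singleton
        refine aux_map (ContinuousLinearMap.id ℂ CA) (Q := ⊥) hb ?_ (fcs.dense' a)
        intro y hy
        simp only [Set.mem_iUnion, Set.mem_range] at hy
        obtain ⟨t, b, rfl⟩ := hy
        show fcs.ι t b ∈ (⊥ : Submodule ℂ CA)
        rw [hB0 b, hι0]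
        exact Submodule.zero_mem _
      left
      rw [Submodule.eq_bot_iff]
      exact fun a _ => (Submodule.mem_bot ℂ).1 (hCA0 a)
    · -- `L = ⊤`: every generator `ι s b` lies in `I`, hence `I = ⊤`
      have hall : ∀ (s : G) (b : B), fcs.ι s b ∈ I := by
        intro s b
        have hbL : b ∈ closure ((Submodule.span ℂ gensL : Submodule ℂ B) : Set B) := by
          have : b ∈ L := by rw [hLtop]; trivial
          exact this
        refine aux_map (ιCLM β fcs s) (Q := I) hIc ?_ hbL
        rintro y ⟨c, d, rfl⟩
        show fcs.ι s (c * d) ∈ I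
        have h1 : fcs.ι s (c * d) = fcs.ι 1 c * fcs.ι s d := by
          have h2 := hmul2 1 s c d
          rw [β.α_one] at h2
          rw [h2]
          exact hcast (one_mul s).symm _
        rw [h1]
        exact hIr _ _ (hJ1 c)
      right
      rw [Submodule.eq_top_iff']
      intro a
      have := aux_map (ContinuousLinearMap.id ℂ CA) (Q := I) hIc
        (fun y hy => by
          simp only [Set.mem_iUnion, Set.mem_range] at hy
          obtain ⟨t, b, rfl⟩ := hy
          exact hall t b) (fcs.dense' a)
      exact this
end
end
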